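/- arXiv:1612.02884 — 6 statements merged into one kernel-verified Lean document; each statement's English description precedes it below -/
import Mathlib

section
/- Let n ≥ 1 and let σ be a permutation in the symmetric group S_n with ℓ(σ) disjoint cycles. Then σ admits a transitive factorization into transpositions, and the minimal length of such a factorization is exactly n + ℓ(σ) − 2; that is, there exist transpositions τ₁,…,τ_{n+ℓ(σ)−2} in S_n with τ₁⋯τ_{n+ℓ(σ)−2} = σ whose generated subgroup acts transitively on {1,…,n}, and every tuple of transpositions whose product is σ and which generates a transitive subgroup of S_n has length at least n + ℓ(σ) − 2. -/
open Equiv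

/-- Number of disjoint cycles of a permutation of `Fin n`, counting each fixed
point as a cycle of length 1. -/
def cycleCount {n : ℕ} (σ : Perm (Fin n)) : ℕ :=
  σ.cycleType.card + (n - σ.support.card)

/-- The subgroup generated by the entries of `L` acts transitively on `Fin n`. -/
def IsTransitiveFamily {n : ℕ} (L : List (Perm (Fin n))) : Prop :=
  ∀ x y : Fin n, ∃ g ∈ Subgroup.closure {τ | τ ∈ L}, g x = y

open Equiv

section SetoidLemmas

variable {α : Type*}

/-- Merge the classes of `a` and `b` in the setoid `s`. -/
def extSetoid (s : Setoid α) (a b : α) : Setoid α where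
  r x y := s.r x y ∨ (s.r x a ∧ s.r b y) ∨ (s.r x b ∧ s.r a y)
  iseqv := by
    constructor
    · exact fun x => Or.inl (s.iseqv.refl x)
    · rintro x y (h | ⟨h1, h2⟩ | ⟨h1, h2⟩)
      · exact Or.inl (s.iseqv.symm h)
      · exact Or.inr (Or.inr ⟨s.iseqv.symm h2, s.iseqv.symm h1⟩)
      · exact Or.inr (Or.inl ⟨s.iseqv.symm h2, s.iseqv.symm h1⟩)
    · rintro x y z (h | ⟨h1, h2⟩ | ⟨h1, h2⟩) (h' | ⟨h1', h2'⟩ | ⟨h1', h2'⟩)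
      · exact Or.inl (s.iseqv.trans h h')
      · exact Or.inr (Or.inl ⟨s.iseqv.trans h h1', h2'⟩)
      · exact Or.inr (Or.inr ⟨s.iseqv.trans h h1', h2'⟩)
      · exact Or.inr (Or.inl ⟨h1, s.iseqv.trans h2 h'⟩)
      · exact Or.inr (Or.inl ⟨h1, h2'⟩)
      · exact Or.inl (s.iseqv.trans h1 h2')
      · exact Or.inr (Or.inr ⟨h1, s.iseqv.trans h2 h'⟩)
      · exact Or.inl (s.iseqv.trans h1 h2')
      · exact Or.inr (Or.inr ⟨h1, h2'⟩)

lemma extSetoid_r (s : Setoid α) (a b x y : α) :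
    (extSetoid s a b).r x y ↔
      (s.r x y ∨ (s.r x a ∧ s.r b y) ∨ (s.r x b ∧ s.r a y)) := Iff.rfl

lemma ext_of_rel (s : Setoid α) {a b : α} (hab : s.r a b) : extSetoid s a b = s := by
  apply Setoid.ext
  intro x y
  constructor
  · rintro (h | ⟨h1, h2⟩ | ⟨h1, h2⟩)
    · exact h
    · exact s.iseqv.trans (s.iseqv.trans h1 hab) h2
    · exact s.iseqv.trans (s.iseqv.trans h1 (s.iseqv.symm hab)) h2
  · exact Or.inl

lemma card_le_ext_card_add_one [Finite α] (s : Setoid α) (a b : α) :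
    Nat.card (Quotient s) ≤ Nat.card (Quotient (extSetoid s a b)) + 1 := by
  classical
  set E := extSetoid s a b with hE
  have hwd : ∀ x y : α, s.r x y →
      (if s.r x a then (Sum.inr () : Quotient E ⊕ Unit) else Sum.inl (Quotient.mk E x))
        = if s.r y a then Sum.inr () else Sum.inl (Quotient.mk E y) := by
    intro x y h
    by_cases hx : s.r x a
    · rw [if_pos hx, if_pos (s.iseqv.trans (s.iseqv.symm h) hx)]
    · rw [if_neg hx, if_neg (fun hy => hx (s.iseqv.trans h hy))]
      exact congrArg _ (Quotient.sound (Or.inl h))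
  let f : Quotient s → Quotient E ⊕ Unit :=
    Quotient.lift (fun x => if s.r x a then Sum.inr () else Sum.inl (Quotient.mk E x)) hwd
  have hinj : Function.Injective f := by
    intro u v
    induction u using Quotient.ind
    induction v using Quotient.ind
    rename_i x y
    intro h
    simp only [f, Quotient.lift_mk] at h
    apply Quotient.sound
    by_cases hx : s.r x a <;> by_cases hy : s.r y a
    · exact s.iseqv.trans hx (s.iseqv.symm hy)
    · rw [if_pos hx, if_neg hy] at h; exact absurd h (by simp)
    · rw [if_neg hx, if_pos hy] at h; exact absurd h (by simp)
    · rw [if_neg hx, if_neg hy] at h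
      have hExy : E.r x y := Quotient.exact (Sum.inl.inj h)
      rcases hExy with h' | ⟨h1, h2⟩ | ⟨h1, h2⟩
      · exact h'
      · exact absurd h1 hx
      · exact absurd (s.iseqv.symm h2) hy
  have := Nat.card_le_card_of_injective f hinj
  rw [Nat.card_sum, (Nat.card_unique : Nat.card Unit = 1)] at this
  exact this

lemma ext_card_add_one_le [Finite α] (s : Setoid α) (a b : α) (hab : ¬s.r a b) :
    Nat.card (Quotient (extSetoid s a b)) + 1 ≤ Nat.card (Quotient s) := by
  classical
  set E := extSetoid s a b with hE
  have hwd : ∀ x y : α, E.r x y →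
      (if s.r x a ∨ s.r x b then Quotient.mk s a else Quotient.mk s x)
        = (if s.r y a ∨ s.r y b then Quotient.mk s a else Quotient.mk s y) := by
    intro x y h
    rcases h with h | ⟨h1, h2⟩ | ⟨h1, h2⟩
    · by_cases hx : s.r x a ∨ s.r x b
      · have hy : s.r y a ∨ s.r y b := by
          rcases hx with hx | hx
          · exact Or.inl (s.iseqv.trans (s.iseqv.symm h) hx)
          · exact Or.inr (s.iseqv.trans (s.iseqv.symm h) hx)
        rw [if_pos hx, if_pos hy]
      · have hy : ¬(s.r y a ∨ s.r y b) := fun hy => hx (by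
          rcases hy with hy | hy
          · exact Or.inl (s.iseqv.trans h hy)
          · exact Or.inr (s.iseqv.trans h hy))
        rw [if_neg hx, if_neg hy]
        exact Quotient.sound h
    · rw [if_pos (Or.inl h1), if_pos (Or.inr (s.iseqv.symm h2))]
    · rw [if_pos (Or.inr h1), if_pos (Or.inl (s.iseqv.symm h2))]
  let g : Quotient E ⊕ Unit → Quotient s :=
    Sum.elim
      (Quotient.lift (fun x => if s.r x a ∨ s.r x b then Quotient.mk s a else Quotient.mk s x) hwd)
      (fun _ => Quotient.mk s b)
  have hinj : Function.Injective g := by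
    rintro (u | u) (v | v) h
    · refine congrArg Sum.inl ?_
      induction u using Quotient.ind
      induction v using Quotient.ind
      rename_i x y
      simp only [g, Sum.elim_inl, Quotient.lift_mk] at h
      apply Quotient.sound
      by_cases hx : s.r x a ∨ s.r x b <;> by_cases hy : s.r y a ∨ s.r y b
      · rcases hx with hx | hx <;> rcases hy with hy | hy
        · exact Or.inl (s.iseqv.trans hx (s.iseqv.symm hy))
        · exact Or.inr (Or.inl ⟨hx, s.iseqv.symm hy⟩)
        · exact Or.inr (Or.inr ⟨hx, s.iseqv.symm hy⟩)
        · exact Or.inl (s.iseqv.trans hx (s.iseqv.symm hy))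
      · rw [if_pos hx, if_neg hy] at h
        exact absurd (Or.inl (s.iseqv.symm (Quotient.exact h))) hy
      · rw [if_neg hx, if_pos hy] at h
        exact absurd (Or.inl (Quotient.exact h)) hx
      · rw [if_neg hx, if_neg hy] at h
        exact Or.inl (Quotient.exact h)
    · exfalso
      induction u using Quotient.ind
      rename_i x
      simp only [g, Sum.elim_inl, Sum.elim_inr, Quotient.lift_mk] at h
      by_cases hx : s.r x a ∨ s.r x b
      · rw [if_pos hx] at h; exact hab (Quotient.exact h)
      · rw [if_neg hx] at h; exact hx (Or.inr (Quotient.exact h))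
    · exfalso
      induction v using Quotient.ind
      rename_i x
      simp only [g, Sum.elim_inl, Sum.elim_inr, Quotient.lift_mk] at h
      by_cases hx : s.r x a ∨ s.r x b
      · rw [if_pos hx] at h; exact hab (Quotient.exact h.symm)
      · rw [if_neg hx] at h; exact hx (Or.inr (Quotient.exact h.symm))
    · exact congrArg Sum.inr (Subsingleton.elim u v)
  have := Nat.card_le_card_of_injective g hinj
  rw [Nat.card_sum, (Nat.card_unique : Nat.card Unit = 1)] at this
  exact this

end SetoidLemmas

def sameCycleSetoid {β : Type*} (σ : Perm β) : Setoid β :=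
  ⟨σ.SameCycle, ⟨fun x => Perm.SameCycle.refl σ x, Perm.SameCycle.symm, Perm.SameCycle.trans⟩⟩

lemma cycleCount_eq_card {n : ℕ} (σ : Perm (Fin n)) :
    cycleCount σ = Nat.card (Quotient (sameCycleSetoid σ)) := by
  classical
  set T := (↥σ.cycleFactorsFinset ⊕ {z : Fin n // σ z = z}) with hT
  let f : Fin n → T := fun x =>
    if h : σ x = x then Sum.inr ⟨x, h⟩
    else Sum.inl ⟨σ.cycleOf x,
      Perm.cycleOf_mem_cycleFactorsFinset_iff.mpr (Perm.mem_support.mpr h)⟩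
  have hfix : ∀ x y : Fin n, σ.SameCycle x y → σ x = x → y = x := by
    rintro x y ⟨i, rfl⟩ hx
    exact (Function.IsFixedPt.perm_zpow hx i)
  have hwd : ∀ x y : Fin n, σ.SameCycle x y → f x = f y := by
    intro x y hxy
    by_cases hx : σ x = x
    · have : y = x := hfix x y hxy hx
      subst this; rfl
    · have hy : ¬σ y = y := fun hy => hx ((hfix y x hxy.symm hy) ▸ hy)
      simp only [f, dif_neg hx, dif_neg hy]
      exact congrArg Sum.inl (Subtype.ext (Perm.SameCycle.cycleOf_eq hxy))
  let F : Quotient (sameCycleSetoid σ) → T := Quotient.lift f hwd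
  have hinj : Function.Injective F := by
    intro u v
    induction u using Quotient.ind
    induction v using Quotient.ind
    rename_i x y
    intro h
    change f x = f y at h
    apply Quotient.sound
    by_cases hx : σ x = x <;> by_cases hy : σ y = y
    · simp only [f, dif_pos hx, dif_pos hy] at h
      have : x = y := congrArg Subtype.val (Sum.inr.inj h)
      exact this ▸ Perm.SameCycle.refl σ x
    · simp only [f, dif_pos hx, dif_neg hy] at h; exact absurd h (by simp)
    · simp only [f, dif_neg hx, dif_pos hy] at h; exact absurd h (by simp)
    · simp only [f, dif_neg hx, dif_neg hy] at h
      have hcyc : σ.cycleOf x = σ.cycleOf y := congrArg Subtype.val (Sum.inl.inj h)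
      have hmem : y ∈ (σ.cycleOf y).support :=
        Perm.mem_support_cycleOf_iff.mpr ⟨Perm.SameCycle.refl σ y, Perm.mem_support.mpr hy⟩
      rw [← hcyc] at hmem
      exact (Perm.mem_support_cycleOf_iff.mp hmem).1
  have hsurj : Function.Surjective F := by
    rintro (⟨c, hc⟩ | ⟨x, hx⟩)
    · obtain ⟨hcyc, hsupp⟩ := Perm.mem_cycleFactorsFinset_iff.mp hc
      obtain ⟨x, hx, -⟩ := hcyc
      have hxs : x ∈ c.support := Perm.mem_support.mpr hx
      have hσx : ¬σ x = x := by rw [← hsupp x hxs]; exact hx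
      refine ⟨Quotient.mk _ x, ?_⟩
      show f x = _
      simp only [f, dif_neg hσx]
      exact congrArg Sum.inl (Subtype.ext (Perm.cycle_is_cycleOf hxs hc).symm)
    · exact ⟨Quotient.mk _ x, by show f x = _; simp only [f, dif_pos hx]⟩
  have hcard : Nat.card (Quotient (sameCycleSetoid σ)) = Nat.card T :=
    Nat.card_eq_of_bijective F ⟨hinj, hsurj⟩
  have h1 : Nat.card (↥σ.cycleFactorsFinset) = Multiset.card σ.cycleType := by
    rw [Nat.card_eq_fintype_card, Fintype.card_coe, Perm.cycleType_def, Multiset.card_map]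
    rfl
  have h2 : Nat.card {z : Fin n // σ z = z} = n - σ.support.card := by
    have e : {z : Fin n // σ z = z} ≃ ↥(Function.fixedPoints σ) :=
      Equiv.subtypeEquivRight fun x => Iff.rfl
    rw [Nat.card_congr e, Nat.card_eq_fintype_card, Perm.card_fixedPoints,
      Perm.sum_cycleType, Fintype.card_fin]
  rw [hcard, hT, Nat.card_sum, h1, h2, cycleCount]

section PermLemmas

variable {n : ℕ}

lemma cycleCount_ne_swapMul {n : ℕ} (σ : Perm (Fin n)) {a b : Fin n} (hab : a ≠ b) :
    cycleCount (swap a b * σ) ≠ cycleCount σ := by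
  intro hcc
  have hsign : ∀ τ : Perm (Fin n),
      Perm.sign τ = (-1 : ℤˣ) ^ (τ.support.card + Multiset.card τ.cycleType) := by
    intro τ
    rw [Perm.sign_of_cycleType, Perm.sum_cycleType]
  have h1 : Perm.sign (swap a b * σ) = -Perm.sign σ := by
    rw [Perm.sign_mul, Perm.sign_swap hab, neg_one_mul]
  have hb1 : σ.support.card ≤ n := by
    simpa using Finset.card_le_card (Finset.subset_univ σ.support)
  have hb2 : (swap a b * σ).support.card ≤ n := by
    simpa using Finset.card_le_card (Finset.subset_univ (swap a b * σ).support)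
  simp only [cycleCount] at hcc
  have hpar : ((swap a b * σ).support.card + Multiset.card (swap a b * σ).cycleType) % 2
      = (σ.support.card + Multiset.card σ.cycleType) % 2 := by omega
  have hpow : ∀ k m : ℕ, k % 2 = m % 2 → ((-1 : ℤˣ)) ^ k = (-1 : ℤˣ) ^ m := by
    intro k m h
    rcases Nat.even_or_odd k with hk | hk
    · have hm : Even m := by rw [Nat.even_iff] at *; omega
      rw [Even.neg_one_pow hk, Even.neg_one_pow hm]
    · have hm : Odd m := by rw [Nat.odd_iff] at *; omega
      rw [Odd.neg_one_pow hk, Odd.neg_one_pow hm]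
  have hthis : Perm.sign (swap a b * σ) = Perm.sign σ := by
    rw [hsign (swap a b * σ), hsign σ]
    exact hpow _ _ hpar
  have this2 := hthis
  rw [h1] at this2
  rename' this2 => this
  have h2 : Perm.sign σ = 1 ∨ Perm.sign σ = -1 := Int.units_eq_one_or _
  rcases h2 with h2 | h2 <;> rw [h2] at this <;> exact absurd this (by decide)

lemma sameCycle_swapMul_imp {β : Type*} [DecidableEq β] [Finite β] (σ : Perm β) (a b x y : β)
    (h : Perm.SameCycle (swap a b * σ) x y) :
    (extSetoid (sameCycleSetoid σ) a b).r x y := by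
  obtain ⟨i, -, rfl⟩ := h.exists_pow_eq'
  clear h
  set E := extSetoid (sameCycleSetoid σ) a b with hEdef
  induction i generalizing x with
  | zero => simpa using E.iseqv.refl x
  | succ i ih =>
    have hstep : ∀ z : β, E.r z ((swap a b * σ) z) := by
      intro z
      rcases eq_or_ne (σ z) a with hz | hz
      · have hz2 : (swap a b * σ) z = b := by rw [Perm.mul_apply, hz, swap_apply_left]
        rw [hz2]
        exact Or.inr (Or.inl ⟨⟨1, by simpa using hz⟩, Perm.SameCycle.refl σ b⟩)
      rcases eq_or_ne (σ z) b with hz' | hz'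
      · have hz2 : (swap a b * σ) z = a := by rw [Perm.mul_apply, hz', swap_apply_right]
        rw [hz2]
        exact Or.inr (Or.inr ⟨⟨1, by simpa using hz'⟩, Perm.SameCycle.refl σ a⟩)
      · have hz2 : (swap a b * σ) z = σ z := by
          rw [Perm.mul_apply, swap_apply_of_ne_of_ne hz hz']
        rw [hz2]
        exact Or.inl ⟨1, by simp⟩
    have h1 : ((swap a b * σ) ^ (i + 1)) x = ((swap a b * σ) ^ i) ((swap a b * σ) x) := by
      rw [pow_succ, Perm.mul_apply]
    rw [h1]
    exact E.iseqv.trans (hstep x) (ih ((swap a b * σ) x))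

lemma extSetoid_swapMul {β : Type*} [DecidableEq β] [Finite β] (σ : Perm β) (a b : β) :
    extSetoid (sameCycleSetoid (swap a b * σ)) a b = extSetoid (sameCycleSetoid σ) a b := by
  have key : ∀ (τ : Perm β) (x y : β), (extSetoid (sameCycleSetoid (swap a b * τ)) a b).r x y →
      (extSetoid (sameCycleSetoid τ) a b).r x y := by
    intro τ x y h
    have hab : (extSetoid (sameCycleSetoid τ) a b).r a b :=
      Or.inr (Or.inl ⟨Perm.SameCycle.refl _ a, Perm.SameCycle.refl _ b⟩)
    set E := extSetoid (sameCycleSetoid τ) a b with hE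
    rcases h with h | ⟨h1, h2⟩ | ⟨h1, h2⟩
    · exact sameCycle_swapMul_imp τ a b x y h
    · exact E.iseqv.trans (sameCycle_swapMul_imp τ a b x a h1)
        (E.iseqv.trans hab (sameCycle_swapMul_imp τ a b b y h2))
    · exact E.iseqv.trans (sameCycle_swapMul_imp τ a b x b h1)
        (E.iseqv.trans (E.iseqv.symm hab) (sameCycle_swapMul_imp τ a b a y h2))
  apply Setoid.ext
  intro x y
  constructor
  · exact key σ x y
  · intro h
    exact key (swap a b * σ) x y (by rwa [swap_mul_self_mul])

lemma cycleCount_swapMul_sameCycle (σ : Perm (Fin n)) {a b : Fin n} (hab : a ≠ b)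
    (h : σ.SameCycle a b) :
    cycleCount (swap a b * σ) = cycleCount σ + 1 := by
  have hkey := extSetoid_swapMul σ a b
  have hEs : extSetoid (sameCycleSetoid σ) a b = sameCycleSetoid σ := ext_of_rel _ h
  by_cases h2 : (swap a b * σ).SameCycle a b
  · exfalso
    have hEs' : extSetoid (sameCycleSetoid (swap a b * σ)) a b
        = sameCycleSetoid (swap a b * σ) := ext_of_rel _ h2
    apply cycleCount_ne_swapMul σ hab
    rw [cycleCount_eq_card, cycleCount_eq_card, ← hEs', hkey, hEs]
  · have e2 := card_le_ext_card_add_one (sameCycleSetoid (swap a b * σ)) a b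
    have e3 := ext_card_add_one_le (sameCycleSetoid (swap a b * σ)) a b h2
    rw [hkey, hEs] at e2 e3
    rw [cycleCount_eq_card, cycleCount_eq_card]
    omega

lemma cycleCount_swapMul_not_sameCycle (σ : Perm (Fin n)) {a b : Fin n} (hab : a ≠ b)
    (h : ¬σ.SameCycle a b) :
    cycleCount (swap a b * σ) + 1 = cycleCount σ := by
  have hkey := extSetoid_swapMul σ a b
  have e2 := card_le_ext_card_add_one (sameCycleSetoid σ) a b
  have e3 := ext_card_add_one_le (sameCycleSetoid σ) a b h
  by_cases h2 : (swap a b * σ).SameCycle a b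
  · have hEs' : extSetoid (sameCycleSetoid (swap a b * σ)) a b
        = sameCycleSetoid (swap a b * σ) := ext_of_rel _ h2
    rw [cycleCount_eq_card, cycleCount_eq_card, ← hEs', hkey]
    omega
  · exfalso
    have e2' := card_le_ext_card_add_one (sameCycleSetoid (swap a b * σ)) a b
    have e3' := ext_card_add_one_le (sameCycleSetoid (swap a b * σ)) a b h2
    rw [hkey] at e2' e3'
    apply cycleCount_ne_swapMul σ hab
    rw [cycleCount_eq_card, cycleCount_eq_card]
    omega

lemma cycleCount_one : cycleCount (1 : Perm (Fin n)) = n := by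
  simp [cycleCount]

lemma cycleCount_lt_of_ne_one {σ : Perm (Fin n)} (h : σ ≠ 1) : cycleCount σ < n := by
  have h2 : Multiset.card σ.cycleType • 2 ≤ σ.cycleType.sum :=
    Multiset.card_nsmul_le_sum fun x hx => Perm.two_le_of_mem_cycleType hx
  rw [smul_eq_mul, Perm.sum_cycleType] at h2
  have hb : σ.support.card ≤ n := by
    simpa using Finset.card_le_card (Finset.subset_univ σ.support)
  have hpos : σ.support.card ≠ 0 := fun hc => h (Perm.card_support_eq_zero.mp hc)
  simp only [cycleCount]
  omega

lemma cycleCount_pos (hn : 1 ≤ n) (σ : Perm (Fin n)) : 1 ≤ cycleCount σ := by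
  rw [cycleCount_eq_card]
  have h1 : Nonempty (Fin n) := ⟨⟨0, hn⟩⟩
  have h2 : Nonempty (Quotient (sameCycleSetoid σ)) := Nonempty.map (Quotient.mk _) h1
  exact Nat.card_pos

lemma exists_min_factorization :
    ∀ (d : ℕ) (σ : Perm (Fin n)), n - cycleCount σ ≤ d →
      ∃ L : List (Perm (Fin n)),
        (∀ τ ∈ L, Perm.IsSwap τ) ∧ L.prod = σ ∧ L.length + cycleCount σ = n := by
  intro d
  induction d with
  | zero =>
    intro σ hσ
    by_cases h1 : σ = 1
    · subst h1
      exact ⟨[], by simp, by simp, by simp [cycleCount_one]⟩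
    · exact absurd hσ (by have := cycleCount_lt_of_ne_one h1; omega)
  | succ d ih =>
    intro σ hσ
    by_cases h1 : σ = 1
    · subst h1
      exact ⟨[], by simp, by simp, by simp [cycleCount_one]⟩
    · have ha : ∃ a : Fin n, σ a ≠ a := by
        by_contra hc
        push_neg at hc
        exact h1 (Equiv.ext fun x => (hc x).trans (Perm.one_apply x).symm)
      obtain ⟨a, ha⟩ := ha
      have hab : a ≠ σ a := Ne.symm ha
      have hsc : σ.SameCycle a (σ a) := ⟨1, by simp⟩
      have hcc := cycleCount_swapMul_sameCycle σ hab hsc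
      have hlt : cycleCount σ < n := cycleCount_lt_of_ne_one h1
      obtain ⟨L, hL1, hL2, hL3⟩ := ih (swap a (σ a) * σ) (by omega)
      refine ⟨swap a (σ a) :: L, ?_, ?_, ?_⟩
      · intro τ hτ
        rcases List.mem_cons.mp hτ with rfl | hτ
        · exact ⟨a, σ a, hab, rfl⟩
        · exact hL1 τ hτ
      · rw [List.prod_cons, hL2, swap_mul_self_mul]
      · simp only [List.length_cons]
        omega

lemma exists_transitive_factorization (hn : 1 ≤ n) :
    ∀ (c : ℕ) (σ : Perm (Fin n)), cycleCount σ ≤ c →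
      ∃ L : List (Perm (Fin n)),
        (∀ τ ∈ L, Perm.IsSwap τ) ∧ L.prod = σ ∧ IsTransitiveFamily L ∧
          L.length + 2 = n + cycleCount σ := by
  intro c
  induction c with
  | zero => intro σ hσ; exact absurd hσ (by have := cycleCount_pos hn σ; omega)
  | succ c ih =>
    intro σ hσc
    by_cases h1 : cycleCount σ = 1
    · obtain ⟨L, hL1, hL2, hL3⟩ := exists_min_factorization (n - cycleCount σ) σ le_rfl
      refine ⟨L, hL1, hL2, ?_, by omega⟩
      intro x y
      have hall : σ.SameCycle x y := by
        have hcard : Nat.card (Quotient (sameCycleSetoid σ)) = 1 := by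
          rw [← cycleCount_eq_card, h1]
        have hsub : Subsingleton (Quotient (sameCycleSetoid σ)) :=
          (Nat.card_eq_one_iff_unique.mp hcard).1
        exact Quotient.exact (Subsingleton.elim (Quotient.mk (sameCycleSetoid σ) x) (Quotient.mk (sameCycleSetoid σ) y))
      obtain ⟨i, hi⟩ := hall
      refine ⟨σ ^ i, ?_, hi⟩
      have hσmem : σ ∈ Subgroup.closure {τ : Perm (Fin n) | τ ∈ L} := by
        rw [← hL2]
        exact list_prod_mem fun τ hτ => Subgroup.subset_closure hτ
      exact zpow_mem hσmem i
    · have h2 : 2 ≤ cycleCount σ := by have := cycleCount_pos hn σ; omega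
      have hcard : 1 < Nat.card (Quotient (sameCycleSetoid σ)) := by
        rw [← cycleCount_eq_card]; omega
      have hnt : Nontrivial (Quotient (sameCycleSetoid σ)) :=
        Finite.one_lt_card_iff_nontrivial.mp hcard
      obtain ⟨u, v, huv⟩ := hnt
      obtain ⟨a, ha⟩ := Quotient.exists_rep u
      obtain ⟨b, hb⟩ := Quotient.exists_rep v
      have hns : ¬σ.SameCycle a b := fun h => huv (by rw [← ha, ← hb]; exact Quotient.sound h)
      have hab : a ≠ b := fun h => hns (h ▸ Perm.SameCycle.refl σ a)
      have hcc := cycleCount_swapMul_not_sameCycle σ hab hns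
      obtain ⟨L, hL1, hL2, hL3, hL4⟩ := ih (swap a b * σ) (by omega)
      refine ⟨swap a b :: L, ?_, ?_, ?_, ?_⟩
      · intro τ hτ
        rcases List.mem_cons.mp hτ with rfl | hτ
        · exact ⟨a, b, hab, rfl⟩
        · exact hL1 τ hτ
      · rw [List.prod_cons, hL2, swap_mul_self_mul]
      · intro x y
        obtain ⟨g, hg, hgx⟩ := hL3 x y
        exact ⟨g, Subgroup.closure_mono (fun τ hτ => List.mem_cons_of_mem _ hτ) hg, hgx⟩
      · simp only [List.length_cons]
        omega

def orbSetoid (H : Subgroup (Perm (Fin n))) : Setoid (Fin n) where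
  r x y := ∃ g ∈ H, g x = y
  iseqv := by
    constructor
    · exact fun x => ⟨1, H.one_mem, rfl⟩
    · rintro x y ⟨g, hg, rfl⟩
      exact ⟨g⁻¹, H.inv_mem hg, g.symm_apply_apply x⟩
    · rintro x y z ⟨g, hg, rfl⟩ ⟨h, hh, rfl⟩
      exact ⟨h * g, H.mul_mem hh hg, Perm.mul_apply h g x⟩

def relStab (s : Setoid (Fin n)) : Subgroup (Perm (Fin n)) where
  carrier := {g | ∀ x, s.r x (g x)}
  one_mem' := fun x => s.iseqv.refl x
  mul_mem' := by
    intro g h hg hh x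
    have h1 : (g * h) x = g (h x) := Perm.mul_apply g h x
    rw [h1]
    exact s.iseqv.trans (hh x) (hg (h x))
  inv_mem' := by
    intro g hg x
    have h1 := hg (g⁻¹ x)
    rw [show g (g⁻¹ x) = x from g.apply_symm_apply x] at h1
    exact s.iseqv.symm h1

lemma lb_aux :
    ∀ L : List (Perm (Fin n)), (∀ τ ∈ L, Perm.IsSwap τ) →
      cycleCount L.prod + n ≤
        L.length + 2 * Nat.card (Quotient (orbSetoid (Subgroup.closure {τ | τ ∈ L}))) := by
  intro L
  induction L with
  | nil =>
    intro _
    have hinj : Function.Injective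
        (fun x : Fin n =>
          Quotient.mk (orbSetoid (Subgroup.closure {τ : Perm (Fin n) | τ ∈ ([] : List (Perm (Fin n)))})) x) := by
      intro x y h
      obtain ⟨g, hg, hgx⟩ := Quotient.exact h
      have hset : {τ : Perm (Fin n) | τ ∈ ([] : List (Perm (Fin n)))} = ∅ := by
        ext τ; simp
      rw [hset, Subgroup.closure_empty, Subgroup.mem_bot] at hg
      subst hg
      simpa using hgx
    have hle := Nat.card_le_card_of_injective _ hinj
    simp only [Nat.card_eq_fintype_card, Fintype.card_fin] at hle
    simp only [List.prod_nil, List.length_nil, cycleCount_one]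
    omega
  | cons τ L ih =>
    intro hsw
    obtain ⟨a, b, hab, rfl⟩ := hsw τ List.mem_cons_self
    have hswL : ∀ τ' ∈ L, Perm.IsSwap τ' := fun τ' h => hsw τ' (List.mem_cons_of_mem _ h)
    have ihL := ih hswL
    set σ' := L.prod with hσ'
    set H' := Subgroup.closure {τ' : Perm (Fin n) | τ' ∈ L} with hH'
    set H := Subgroup.closure {τ' : Perm (Fin n) | τ' ∈ (swap a b :: L)} with hH
    set r := orbSetoid H' with hr
    set E := extSetoid r a b with hEd
    have hstab : H ≤ relStab E := by
      rw [hH]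
      apply (Subgroup.closure_le _).mpr
      intro g hg
      rcases List.mem_cons.mp hg with rfl | hgL
      · intro x
        rcases eq_or_ne x a with rfl | hxa
        · rw [swap_apply_left]
          exact Or.inr (Or.inl ⟨r.iseqv.refl x, r.iseqv.refl b⟩)
        rcases eq_or_ne x b with rfl | hxb
        · rw [swap_apply_right]
          exact Or.inr (Or.inr ⟨r.iseqv.refl x, r.iseqv.refl a⟩)
        · have hx2 : swap a b x = x := swap_apply_of_ne_of_ne hxa hxb
          rw [hx2]
      · intro x
        exact Or.inl ⟨g, Subgroup.subset_closure hgL, rfl⟩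
    have hle : ∀ x y : Fin n, (orbSetoid H).r x y → E.r x y := by
      rintro x y ⟨g, hg, rfl⟩
      exact hstab hg x
    have hsurj : Nat.card (Quotient E) ≤ Nat.card (Quotient (orbSetoid H)) := by
      apply Nat.card_le_card_of_surjective
        (Quotient.lift (fun x => Quotient.mk E x) (fun x y h => Quotient.sound (hle x y h)))
      intro q
      obtain ⟨x, hx⟩ := Quotient.exists_rep q
      exact ⟨Quotient.mk _ x, hx⟩
    have hprod : (swap a b :: L).prod = swap a b * σ' := List.prod_cons
    by_cases hsc : σ'.SameCycle a b
    · have hrab : r.r a b := by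
        obtain ⟨i, hi⟩ := hsc
        exact ⟨σ' ^ i,
          zpow_mem (list_prod_mem fun τ' h => Subgroup.subset_closure h) i, hi⟩
      have hEr : E = r := ext_of_rel r hrab
      have hcc := cycleCount_swapMul_sameCycle σ' hab hsc
      have hcmp : Nat.card (Quotient r) ≤ Nat.card (Quotient (orbSetoid H)) := by
        rw [← hEr]; exact hsurj
      rw [hprod, hcc, List.length_cons]
      omega
    · have hcc := cycleCount_swapMul_not_sameCycle σ' hab hsc
      have hE2 := card_le_ext_card_add_one r a b
      rw [← hEd] at hE2
      rw [hprod, List.length_cons]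
      omega

lemma card_orb_transitive (hn : 1 ≤ n) (L : List (Perm (Fin n))) (h : IsTransitiveFamily L) :
    Nat.card (Quotient (orbSetoid (Subgroup.closure {τ | τ ∈ L}))) = 1 := by
  rw [Nat.card_eq_one_iff_unique]
  constructor
  · constructor
    intro u v
    obtain ⟨x, hx⟩ := Quotient.exists_rep u
    obtain ⟨y, hy⟩ := Quotient.exists_rep v
    rw [← hx, ← hy]
    obtain ⟨g, hg, hgx⟩ := h x y
    exact Quotient.sound ⟨g, hg, hgx⟩
  · exact ⟨Quotient.mk _ ⟨0, hn⟩⟩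

end PermLemmas

/-- Every permutation of `{1,…,n}` (`n ≥ 1`) admits a transitive factorization into
transpositions, of minimal length exactly `n + ℓ(σ) - 2`. -/
theorem min_transitive_factorization_into_transpositions
    (n : ℕ) (hn : 1 ≤ n) (σ : Perm (Fin n)) :
    (∃ L : List (Perm (Fin n)),
        L.length = n + cycleCount σ - 2 ∧
        (∀ τ ∈ L, τ.IsSwap) ∧ L.prod = σ ∧ IsTransitiveFamily L) ∧
    (∀ L : List (Perm (Fin n)),
        (∀ τ ∈ L, τ.IsSwap) → L.prod = σ → IsTransitiveFamily L →
        n + cycleCount σ - 2 ≤ L.length) := by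
  constructor
  · obtain ⟨L, h1, h2, h3, h4⟩ := exists_transitive_factorization hn (cycleCount σ) σ le_rfl
    exact ⟨L, by omega, h1, h2, h3⟩
  · intro L hsw hprod htrans
    have hlb := lb_aux L hsw
    rw [hprod, card_orb_transitive hn L htrans] at hlb
    omega
end

section
/- Let (τ₁,…,τ_k) be a minimal transitive factorization of σ ∈ S_n into transpositions, and write τ₁ = (j₁ j₂). If j₁ and j₂ lie in the same cycle of σ, then: j₁ and j₂ lie in different cycles of σ' = τ₁σ = τ₂⋯τ_k; ℓ(σ') = ℓ(σ) + 1; and the subgroup generated by {τ₂,…,τ_k} has exactly two orbits on {1,…,n}, one containing j₁ and the other containing j₂. -/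
open Equiv

/-- `L` is a minimal transitive factorization of `σ` into transpositions. -/
def IsMinSwapFact {n : ℕ} (σ : Perm (Fin n)) (L : List (Perm (Fin n))) : Prop :=
  (∀ τ ∈ L, τ.IsSwap) ∧ L.prod = σ ∧ IsTransitiveFamily L ∧
  ∀ L' : List (Perm (Fin n)),
    (∀ τ ∈ L', τ.IsSwap) → L'.prod = σ → IsTransitiveFamily L' → L.length ≤ L'.length


namespace CutCase
variable {n : ℕ}


/-- Cardinality counting for an "almost injective" surjection: exact version. -/
theorem card_of_almost_inj {α β : Type*} [Finite α] [Finite β] (f : α → β)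
    (hsurj : Function.Surjective f) (a₀ b₀ : α) (hne : a₀ ≠ b₀) (heq : f a₀ = f b₀)
    (hinj : ∀ x y, x ≠ b₀ → y ≠ b₀ → f x = f y → x = y) :
    Nat.card β + 1 = Nat.card α := by
  classical
  have := Fintype.ofFinite α
  have := Fintype.ofFinite β
  set e : {x : α // x ≠ b₀} → β := fun x => f x.1 with he
  have hbij : Function.Bijective e := by
    constructor
    · rintro ⟨x, hx⟩ ⟨y, hy⟩ hxy
      exact Subtype.ext (hinj x y hx hy hxy)
    · intro y
      obtain ⟨x, rfl⟩ := hsurj y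
      rcases eq_or_ne x b₀ with rfl | hx
      · exact ⟨⟨a₀, hne⟩, heq⟩
      · exact ⟨⟨x, hx⟩, rfl⟩
  have h1 : Nat.card {x : α // x ≠ b₀} = Nat.card β := Nat.card_eq_of_bijective e hbij
  have h2 : Fintype.card {x : α // x ≠ b₀} = Fintype.card α - 1 := by
    rw [Fintype.card_subtype_compl (p := fun x => x = b₀), Fintype.card_subtype_eq b₀]
  have h3 : 0 < Fintype.card α := Fintype.card_pos_iff.2 ⟨a₀⟩
  simp only [Nat.card_eq_fintype_card] at h1 ⊢
  omega

/-- Cardinality counting for an "almost injective" surjection: inequality version. -/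
theorem card_of_almost_inj_le {α β : Type*} [Finite α] [Finite β] (f : α → β)
    (hsurj : Function.Surjective f) (b₀ : α)
    (hinj : ∀ x y, x ≠ b₀ → y ≠ b₀ → f x = f y → x = y) :
    Nat.card α ≤ Nat.card β + 1 := by
  classical
  have := Fintype.ofFinite α
  have := Fintype.ofFinite β
  set e : {x : α // x ≠ b₀} → β := fun x => f x.1 with he
  have hinj' : Function.Injective e := by
    rintro ⟨x, hx⟩ ⟨y, hy⟩ hxy
    exact Subtype.ext (hinj x y hx hy hxy)
  have h1 : Fintype.card {x : α // x ≠ b₀} ≤ Fintype.card β := Fintype.card_le_of_injective e hinj'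
  have h2 : Fintype.card {x : α // x ≠ b₀} = Fintype.card α - 1 := by
    rw [Fintype.card_subtype_compl (p := fun x => x = b₀), Fintype.card_subtype_eq b₀]
  have h3 : 0 < Fintype.card α := Fintype.card_pos_iff.2 ⟨b₀⟩
  simp only [Nat.card_eq_fintype_card]
  omega

/-- A surjection that identifies two distinct points strictly decreases finite cardinality. -/
theorem card_lt_of_surj_not_inj {α β : Type*} [Finite α] [Finite β] (f : α → β)
    (hsurj : Function.Surjective f) (a₀ b₀ : α) (hne : a₀ ≠ b₀) (heq : f a₀ = f b₀) :
    Nat.card β < Nat.card α := by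
  classical
  have := Fintype.ofFinite α
  have := Fintype.ofFinite β
  have hle : Nat.card β ≤ Nat.card α := Nat.card_le_card_of_surjective f hsurj
  rcases lt_or_eq_of_le hle with h | h
  · exact h
  · exfalso
    have : Function.Bijective f := by
      rw [Fintype.bijective_iff_surjective_and_card]
      simp only [Nat.card_eq_fintype_card] at h
      exact ⟨hsurj, h.symm⟩
    exact hne (this.1 heq)

/-- If the relation implies equality, the quotient has full cardinality. -/
theorem card_quotient_of_eq {α : Type*} [Finite α] (s : Setoid α)
    (h : ∀ x y, s.r x y → x = y) : Nat.card (Quotient s) = Nat.card α := by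
  refine (Nat.card_eq_of_bijective (Quotient.mk s) ⟨fun x y hxy => h x y (Quotient.exact hxy),
    fun q => ?_⟩).symm
  obtain ⟨x⟩ := q
  exact ⟨x, rfl⟩


def scSetoid (σ : Perm (Fin n)) : Setoid (Fin n) :=
  ⟨σ.SameCycle, ⟨fun _ => Perm.SameCycle.refl σ _, fun h => h.symm, fun h h' => h.trans h'⟩⟩

noncomputable abbrev ncyc (σ : Perm (Fin n)) : ℕ := Nat.card (Quotient (scSetoid σ))

theorem cycleCount_eq_ncyc (σ : Perm (Fin n)) : cycleCount σ = ncyc σ := by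
  classical
  set F : Fin n → {c // c ∈ σ.cycleFactorsFinset} ⊕ {x : Fin n // x ∉ σ.support} :=
    fun x => if hx : x ∈ σ.support then
      Sum.inl ⟨σ.cycleOf x, Perm.cycleOf_mem_cycleFactorsFinset_iff.2 hx⟩
    else Sum.inr ⟨x, hx⟩ with hF
  have hwd : ∀ x y, σ.SameCycle x y → F x = F y := by
    intro x y hxy
    have hsupp : x ∈ σ.support ↔ y ∈ σ.support := hxy.mem_support_iff
    by_cases hx : x ∈ σ.support
    · have hy : y ∈ σ.support := hsupp.1 hx
      simp only [hF, dif_pos hx, dif_pos hy, Sum.inl.injEq, Subtype.mk_eq_mk]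
      exact hxy.cycleOf_eq
    · have hxy' : x = y := hxy.eq_of_left (show σ x = x by simpa [Perm.mem_support, not_not] using hx)
      simp [hF, hxy']
  set G : Quotient (scSetoid σ) → _ := Quotient.lift F hwd with hG
  have hbij : Function.Bijective G := by
    constructor
    · rintro ⟨x⟩ ⟨y⟩ hxy
      change F x = F y at hxy
      refine Quotient.sound ?_
      show σ.SameCycle x y
      by_cases hx : x ∈ σ.support <;> by_cases hy : y ∈ σ.support
      · simp only [hF, dif_pos hx, dif_pos hy, Sum.inl.injEq, Subtype.mk_eq_mk] at hxy
        have : y ∈ (σ.cycleOf y).support := by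
          rw [Perm.mem_support_cycleOf_iff]
          exact ⟨Perm.SameCycle.refl _ _, hy⟩
        rw [← hxy, Perm.mem_support_cycleOf_iff] at this
        exact this.1
      · simp only [hF, dif_pos hx, dif_neg hy, reduceCtorEq] at hxy
      · simp only [hF, dif_neg hx, dif_pos hy, reduceCtorEq] at hxy
      · simp only [hF, dif_neg hx, dif_neg hy, Sum.inr.injEq, Subtype.mk_eq_mk] at hxy
        exact hxy ▸ Perm.SameCycle.refl _ _
    · rintro (⟨c, hc⟩ | ⟨x, hx⟩)
      · have hne : c.support.Nonempty := (Perm.mem_cycleFactorsFinset_iff.1 hc).1.nonempty_support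
        obtain ⟨x, hxc⟩ := hne
        have hcx : c = σ.cycleOf x := Perm.cycle_is_cycleOf hxc hc
        have hxs : x ∈ σ.support := by
          have h1 : c x ≠ x := Perm.mem_support.1 hxc
          have h2 : c x = σ x := (Perm.mem_cycleFactorsFinset_iff.1 hc).2 x hxc
          exact Perm.mem_support.2 (h2 ▸ h1)
        refine ⟨⟦x⟧, ?_⟩
        show F x = _
        simp only [hF, dif_pos hxs]
        exact congrArg Sum.inl (Subtype.ext hcx.symm)
      · refine ⟨⟦x⟧, ?_⟩
        show F x = _
        simp only [hF, dif_neg hx]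
  have hcard : ncyc σ = σ.cycleFactorsFinset.card + (n - σ.support.card) := by
    rw [ncyc, Nat.card_eq_of_bijective G hbij, Nat.card_eq_fintype_card, Fintype.card_sum]
    congr 1
    · simp [Fintype.card_coe]
    · rw [Fintype.card_subtype_compl, Fintype.card_fin]
      congr 1
      exact Fintype.card_coe _
  rw [hcard, cycleCount, Perm.cycleType_def]
  congr 1
  rw [Multiset.card_map]
  rfl

/-- Powers of a permutation fixing `a` fix `a`. -/
theorem pow_fix {ρ : Perm (Fin n)} {a : Fin n} (h : ρ a = a) : ∀ m : ℕ, (ρ ^ m) a = a := by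
  intro m
  induction m with
  | zero => rfl
  | succ m ih => rw [pow_succ, Perm.mul_apply, h, ih]

theorem sameCycle_exists_nat {σ : Perm (Fin n)} {x y : Fin n} (h : σ.SameCycle x y) :
    ∃ m : ℕ, (σ ^ m) x = y := by
  obtain ⟨i, hi, h⟩ := h.exists_pow_eq'
  exact ⟨i, h⟩

/-- In the split case, `j₁` and `j₂` end up in different cycles. -/
theorem not_sameCycle_swap_mul (σ : Perm (Fin n)) {a b : Fin n} (hab : a ≠ b)
    (h : σ.SameCycle a b) : ¬ (Equiv.swap a b * σ).SameCycle a b := by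
  classical
  set ρ := Equiv.swap a b * σ with hρ
  have hex : ∃ m : ℕ, 0 < m ∧ (σ ^ m) a = b := by
    obtain ⟨m, hm⟩ := sameCycle_exists_nat h
    rcases Nat.eq_zero_or_pos m with rfl | hpos
    · exact absurd hm hab
    · exact ⟨m, hpos, hm⟩
  set d := Nat.find hex with hd
  obtain ⟨hd0, hdb⟩ : 0 < d ∧ (σ ^ d) a = b := Nat.find_spec hex
  have hmin : ∀ m, m < d → ¬(0 < m ∧ (σ ^ m) a = b) := fun m hm => Nat.find_min hex hm
  have hkey : ∀ j, 0 < j → j < d → (σ ^ j) a ≠ a ∧ (σ ^ j) a ≠ b := by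
    intro j hj0 hjd
    constructor
    · intro hja
      have : (σ ^ (d - j)) ((σ ^ j) a) = b := by
        rw [← Perm.mul_apply, ← pow_add, Nat.sub_add_cancel hjd.le, hdb]
      rw [hja] at this
      exact hmin (d - j) (by omega) ⟨by omega, this⟩
    · exact fun hjb => hmin j hjd ⟨hj0, hjb⟩
  have hseg : ∀ j, j < d → (ρ ^ j) a = (σ ^ j) a := by
    intro j hjd
    induction j with
    | zero => rfl
    | succ j ih =>
      have hj' : j < d := by omega
      rw [pow_succ', Perm.mul_apply, ih hj', hρ, Perm.mul_apply, ← Perm.mul_apply σ,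
        ← pow_succ']
      obtain ⟨h1, h2⟩ := hkey (j + 1) (by omega) hjd
      exact swap_apply_of_ne_of_ne h1 h2
  have hfix : (ρ ^ d) a = a := by
    have hd1 : d = (d - 1) + 1 := by omega
    rw [hd1, pow_succ', Perm.mul_apply, hseg (d - 1) (by omega), hρ, Perm.mul_apply,
      ← Perm.mul_apply σ, ← pow_succ', ← hd1, hdb, swap_apply_right]
  intro hcon
  obtain ⟨m, hm⟩ := sameCycle_exists_nat hcon
  have hmod : (ρ ^ m) a = (ρ ^ (m % d)) a := by
    conv_lhs => rw [← Nat.mod_add_div m d]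
    rw [pow_add, Perm.mul_apply, pow_mul, pow_fix hfix]
  rw [hmod] at hm
  rcases Nat.eq_zero_or_pos (m % d) with h0 | hpos
  · rw [h0] at hm; exact hab hm
  · have hlt : m % d < d := Nat.mod_lt _ hd0
    rw [hseg _ hlt] at hm
    exact (hkey _ hpos hlt).2 hm

/-- In the merge case, `a` and `b` end up in the same cycle. -/
theorem sameCycle_swap_mul_of_not (σ : Perm (Fin n)) {a b : Fin n}
    (h : ¬ σ.SameCycle a b) : (Equiv.swap a b * σ).SameCycle a b := by
  classical
  set ρ := Equiv.swap a b * σ with hρ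
  have hex : ∃ m : ℕ, 0 < m ∧ (σ ^ m) b = b := by
    refine ⟨orderOf σ, orderOf_pos σ, ?_⟩
    rw [pow_orderOf_eq_one]; rfl
  set p := Nat.find hex with hp
  obtain ⟨hp0, hpb⟩ : 0 < p ∧ (σ ^ p) b = b := Nat.find_spec hex
  have hmin : ∀ m, m < p → ¬(0 < m ∧ (σ ^ m) b = b) := fun m hm => Nat.find_min hex hm
  have hkey : ∀ j, 0 < j → j < p → (σ ^ j) b ≠ a ∧ (σ ^ j) b ≠ b := by
    intro j hj0 hjp
    constructor
    · intro hja
      exact h ⟨-(j : ℤ), by rw [← hja]; simp [← zpow_natCast]⟩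
    · exact fun hjb => hmin j hjp ⟨hj0, hjb⟩
  have hseg : ∀ j, j < p → (ρ ^ j) b = (σ ^ j) b := by
    intro j hjp
    induction j with
    | zero => rfl
    | succ j ih =>
      have hj' : j < p := by omega
      rw [pow_succ', Perm.mul_apply, ih hj', hρ, Perm.mul_apply, ← Perm.mul_apply σ,
        ← pow_succ']
      obtain ⟨h1, h2⟩ := hkey (j + 1) (by omega) hjp
      exact swap_apply_of_ne_of_ne h1 h2
  have hba : (ρ ^ p) b = a := by
    have hp1 : p = (p - 1) + 1 := by omega
    rw [hp1, pow_succ', Perm.mul_apply, hseg (p - 1) (by omega), hρ, Perm.mul_apply,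
      ← Perm.mul_apply σ, ← pow_succ', ← hp1, hpb, swap_apply_right]
  have hba' : ρ.SameCycle b a := ⟨(p : ℤ), by rw [zpow_natCast]; exact hba⟩
  exact hba'.symm


/-- (i): same-cycle in `swap a b * σ` implies same-cycle in `σ` when `a, b` are in
the same `σ`-cycle. -/
theorem sameCycle_of_swap_mul {σ : Perm (Fin n)} {a b x y : Fin n}
    (hab : σ.SameCycle a b) (h : (Equiv.swap a b * σ).SameCycle x y) : σ.SameCycle x y := by
  classical
  set ρ := Equiv.swap a b * σ with hρ
  have step : ∀ z, σ.SameCycle z (ρ z) := by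
    intro z
    have hz : σ.SameCycle z (σ z) := ⟨1, by simp⟩
    rw [hρ, Perm.mul_apply]
    rcases eq_or_ne (σ z) a with ha | ha
    · rw [ha, swap_apply_left]; exact (ha ▸ hz).trans hab
    · rcases eq_or_ne (σ z) b with hb | hb
      · rw [hb, swap_apply_right]; exact (hb ▸ hz).trans hab.symm
      · rw [swap_apply_of_ne_of_ne ha hb]; exact hz
  have main : ∀ (m : ℕ) (z : Fin n), σ.SameCycle z ((ρ ^ m) z) := by
    intro m
    induction m with
    | zero => exact fun z => Perm.SameCycle.refl _ _
    | succ m ih =>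
      intro z
      rw [pow_succ, Perm.mul_apply]
      exact ((step z).trans (ih (ρ z)))
  obtain ⟨m, hm⟩ := sameCycle_exists_nat h
  exact hm ▸ main m x

/-- (ii): the `σ`-class of `a` is covered by the `ρ`-classes of `a` and `b`. -/
theorem swap_mul_class_cover {σ : Perm (Fin n)} {a b x : Fin n}
    (h : σ.SameCycle a x) :
    (Equiv.swap a b * σ).SameCycle a x ∨ (Equiv.swap a b * σ).SameCycle b x := by
  classical
  set ρ := Equiv.swap a b * σ with hρ
  have hσρ : ∀ z, σ z = Equiv.swap a b (ρ z) := by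
    intro z
    rw [hρ, Perm.mul_apply, swap_apply_self]
  have main : ∀ m : ℕ, ρ.SameCycle a ((σ ^ m) a) ∨ ρ.SameCycle b ((σ ^ m) a) := by
    intro m
    induction m with
    | zero => exact Or.inl (Perm.SameCycle.refl _ _)
    | succ m ih =>
      set z := (σ ^ m) a with hz
      have hstep : (σ ^ (m + 1)) a = Equiv.swap a b (ρ z) := by
        rw [pow_succ', Perm.mul_apply, ← hz, hσρ]
      rcases eq_or_ne (ρ z) a with hra | hra
      · right; rw [hstep, hra, swap_apply_left]
      · rcases eq_or_ne (ρ z) b with hrb | hrb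
        · left; rw [hstep, hrb, swap_apply_right]
        · have hz' : (σ ^ (m + 1)) a = ρ z := by
            rw [hstep, swap_apply_of_ne_of_ne hra hrb]
          have hzρ : ρ.SameCycle z (ρ z) := ⟨1, by simp⟩
          rcases ih with h1 | h1
          · exact Or.inl (hz' ▸ h1.trans hzρ)
          · exact Or.inr (hz' ▸ h1.trans hzρ)
  obtain ⟨m, hm⟩ := sameCycle_exists_nat h
  exact hm ▸ main m

/-- (v): a `σ`-cycle not containing `a` nor `b` is untouched. -/
theorem sameCycle_swap_mul_of_not_mem {σ : Perm (Fin n)} {a b x y : Fin n}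
    (h : σ.SameCycle x y) (hxa : ¬ σ.SameCycle x a) (hxb : ¬ σ.SameCycle x b) :
    (Equiv.swap a b * σ).SameCycle x y := by
  classical
  set ρ := Equiv.swap a b * σ with hρ
  have main : ∀ m : ℕ, (ρ ^ m) x = (σ ^ m) x := by
    intro m
    induction m with
    | zero => rfl
    | succ m ih =>
      rw [pow_succ', Perm.mul_apply, ih, hρ, Perm.mul_apply, ← Perm.mul_apply σ, ← pow_succ']
      refine swap_apply_of_ne_of_ne (fun hc => hxa ⟨(m + 1 : ℕ), ?_⟩) fun hc => hxb ⟨(m + 1 : ℕ), ?_⟩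
      · rw [zpow_natCast]; exact hc
      · rw [zpow_natCast]; exact hc
  obtain ⟨m, hm⟩ := sameCycle_exists_nat h
  exact ⟨(m : ℕ), by rw [zpow_natCast, main m]; exact hm⟩

/-- Split: multiplying by a swap inside one cycle increases the cycle count by 1. -/
theorem ncyc_swap_mul {σ : Perm (Fin n)} {a b : Fin n} (hab : a ≠ b)
    (h : σ.SameCycle a b) : ncyc (Equiv.swap a b * σ) = ncyc σ + 1 := by
  classical
  set ρ := Equiv.swap a b * σ with hρ
  set f : Quotient (scSetoid ρ) → Quotient (scSetoid σ) :=
    Quotient.lift (fun x => (Quotient.mk (scSetoid σ) x))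
      (fun x y hxy => Quotient.sound (sameCycle_of_swap_mul h hxy)) with hf
  have hsurj : Function.Surjective f := by
    rintro ⟨x⟩
    exact ⟨⟦x⟧, rfl⟩
  have hne : (⟦a⟧ : Quotient (scSetoid ρ)) ≠ ⟦b⟧ := fun hc =>
    not_sameCycle_swap_mul σ hab h (Quotient.exact hc)
  have heq : f ⟦a⟧ = f ⟦b⟧ := Quotient.sound h
  have hinj : ∀ x y : Quotient (scSetoid ρ), x ≠ ⟦b⟧ → y ≠ ⟦b⟧ → f x = f y → x = y := by
    rintro ⟨x⟩ ⟨y⟩ hx hy hxy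
    have hxb : ¬ ρ.SameCycle b x := fun hc => hx (Quotient.sound hc.symm)
    have hyb : ¬ ρ.SameCycle b y := fun hc => hy (Quotient.sound hc.symm)
    have hσxy : σ.SameCycle x y := Quotient.exact hxy
    refine Quotient.sound ?_
    show ρ.SameCycle x y
    by_cases hxa : σ.SameCycle a x
    · have h1 : ρ.SameCycle a x := (swap_mul_class_cover hxa).resolve_right hxb
      have h2 : ρ.SameCycle a y :=
        (swap_mul_class_cover (hxa.trans hσxy)).resolve_right hyb
      exact h1.symm.trans h2
    · have hxb' : ¬ σ.SameCycle x b := fun hc => hxa (hc.trans h.symm).symm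
      exact sameCycle_swap_mul_of_not_mem hσxy (fun hc => hxa hc.symm) hxb'
  exact (card_of_almost_inj f hsurj ⟦a⟧ ⟦b⟧ hne heq hinj).symm

/-- Merge: multiplying by a swap across two cycles decreases the cycle count by 1. -/
theorem ncyc_swap_mul_of_not {σ : Perm (Fin n)} {a b : Fin n} (hab : a ≠ b)
    (h : ¬ σ.SameCycle a b) : ncyc σ = ncyc (Equiv.swap a b * σ) + 1 := by
  have h1 := sameCycle_swap_mul_of_not σ h
  have h2 := ncyc_swap_mul hab h1
  rw [← mul_assoc, swap_mul_self, one_mul] at h2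
  exact h2

/-- The orbit relation of the subgroup generated by `S`. -/
def orbSetoid (S : Set (Perm (Fin n))) : Setoid (Fin n) where
  r x y := ∃ g ∈ Subgroup.closure S, g x = y
  iseqv := by
    refine ⟨fun x => ⟨1, one_mem _, rfl⟩, ?_, ?_⟩
    · rintro x y ⟨g, hg, rfl⟩
      exact ⟨g⁻¹, inv_mem hg, g.symm_apply_apply x⟩
    · rintro x y z ⟨g, hg, rfl⟩ ⟨g', hg', rfl⟩
      exact ⟨g' * g, mul_mem hg' hg, rfl⟩

noncomputable abbrev nOrb (S : Set (Perm (Fin n))) : ℕ := Nat.card (Quotient (orbSetoid S))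

theorem orbRel_of_sameCycle {S : Set (Perm (Fin n))} {π : Perm (Fin n)} (hπ : π ∈ Subgroup.closure S)
    {x y : Fin n} (h : π.SameCycle x y) : (orbSetoid S).r x y := by
  obtain ⟨i, hi⟩ := h
  exact ⟨π ^ i, zpow_mem hπ i, hi⟩

theorem orbRel_mono {S : Set (Perm (Fin n))} {T : Set (Perm (Fin n))} (hST : S ⊆ T)
    {x y : Fin n} (h : (orbSetoid S).r x y) : (orbSetoid T).r x y := by
  obtain ⟨g, hg, rfl⟩ := h
  exact ⟨g, Subgroup.closure_mono hST hg, rfl⟩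

/-- Cover lemma: adding the generator `swap a b` only merges the classes of `a` and `b`. -/
theorem orbRel_insert_cover {S : Set (Perm (Fin n))} {a b x y : Fin n}
    (h : (orbSetoid (insert (Equiv.swap a b) S)).r x y) :
    (orbSetoid S).r x y ∨
      (((orbSetoid S).r x a ∨ (orbSetoid S).r x b) ∧
       ((orbSetoid S).r y a ∨ (orbSetoid S).r y b)) := by
  classical
  set r := (orbSetoid S).r with hr
  have hrefl : ∀ z, r z z := fun z => (orbSetoid S).iseqv.refl z
  have hsymm : ∀ {z w}, r z w → r w z := fun h => (orbSetoid S).iseqv.symm h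
  have htrans : ∀ {z w v}, r z w → r w v → r z v := fun h h' => (orbSetoid S).iseqv.trans h h'
  set AB : Fin n → Prop := fun z => r z a ∨ r z b with hAB
  obtain ⟨g, hg, rfl⟩ := h
  suffices hP : ∀ z, r z (g z) ∨ (AB z ∧ AB (g z)) by
    rcases hP x with h1 | ⟨h1, h2⟩
    · exact Or.inl h1
    · exact Or.inr ⟨h1, h2⟩
  clear x
  induction hg using Subgroup.closure_induction with
  | mem g hgS =>
    intro z
    rcases hgS with rfl | hgS
    · rcases eq_or_ne z a with rfl | hza
      · rw [swap_apply_left]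
        exact Or.inr ⟨Or.inl (hrefl _), Or.inr (hrefl _)⟩
      · rcases eq_or_ne z b with rfl | hzb
        · rw [swap_apply_right]
          exact Or.inr ⟨Or.inr (hrefl _), Or.inl (hrefl _)⟩
        · rw [swap_apply_of_ne_of_ne hza hzb]
          exact Or.inl (hrefl _)
    · exact Or.inl ⟨g, Subgroup.subset_closure hgS, rfl⟩
  | one => exact fun z => Or.inl (hrefl z)
  | mul g g' hg hg' ihg ihg' =>
    intro z
    rw [Perm.mul_apply]
    rcases ihg' z with h1 | ⟨h1, h2⟩
    · rcases ihg (g' z) with h3 | ⟨h3, h4⟩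
      · exact Or.inl (htrans h1 h3)
      · refine Or.inr ⟨?_, h4⟩
        rcases h3 with h3 | h3
        · exact Or.inl (htrans h1 h3)
        · exact Or.inr (htrans h1 h3)
    · rcases ihg (g' z) with h3 | ⟨h3, h4⟩
      · refine Or.inr ⟨h1, ?_⟩
        rcases h2 with h2 | h2
        · exact Or.inl (htrans (hsymm h3) h2)
        · exact Or.inr (htrans (hsymm h3) h2)
      · exact Or.inr ⟨h1, h4⟩
  | inv g hg ihg =>
    intro z
    rcases ihg (g⁻¹ z) with h1 | ⟨h1, h2⟩
    · rw [show g (g⁻¹ z) = z from g.apply_symm_apply z] at h1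
      exact Or.inl (hsymm h1)
    · rw [show g (g⁻¹ z) = z from g.apply_symm_apply z] at h2
      exact Or.inr ⟨h2, h1⟩

/-- If `a` and `b` are already in the same orbit, adding `swap a b` changes nothing. -/
theorem orbSetoid_insert_eq {S : Set (Perm (Fin n))} {a b : Fin n}
    (h : (orbSetoid S).r a b) : orbSetoid (insert (Equiv.swap a b) S) = orbSetoid S := by
  have hsymm : ∀ {z w : Fin n}, (orbSetoid S).r z w → (orbSetoid S).r w z :=
    fun h => (orbSetoid S).iseqv.symm h
  have htrans : ∀ {z w v : Fin n}, (orbSetoid S).r z w → (orbSetoid S).r w v →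
      (orbSetoid S).r z v := fun h h' => (orbSetoid S).iseqv.trans h h'
  refine Setoid.ext fun x y => ⟨fun hxy => ?_, fun hxy => orbRel_mono (Set.subset_insert _ _) hxy⟩
  rcases orbRel_insert_cover hxy with h1 | ⟨h1, h2⟩
  · exact h1
  · have hxa : (orbSetoid S).r x a := by
      rcases h1 with h1 | h1
      · exact h1
      · exact htrans h1 (hsymm h)
    have hya : (orbSetoid S).r y a := by
      rcases h2 with h2 | h2
      · exact h2
      · exact htrans h2 (hsymm h)
    exact htrans hxa (hsymm hya)

/-- Adding one swap generator decreases the orbit count by at most 1. -/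
theorem nOrb_le_insert_add_one (S : Set (Perm (Fin n))) (a b : Fin n) :
    nOrb S ≤ nOrb (insert (Equiv.swap a b) S) + 1 := by
  classical
  set S' := insert (Equiv.swap a b) S with hS'
  set f : Quotient (orbSetoid S) → Quotient (orbSetoid S') :=
    Quotient.lift (fun x => (Quotient.mk (orbSetoid S') x))
      (fun x y hxy => Quotient.sound (orbRel_mono (Set.subset_insert _ _) hxy)) with hf
  have hsurj : Function.Surjective f := by rintro ⟨x⟩; exact ⟨⟦x⟧, rfl⟩
  have hsymm : ∀ {z w : Fin n}, (orbSetoid S).r z w → (orbSetoid S).r w z :=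
    fun h => (orbSetoid S).iseqv.symm h
  have htrans : ∀ {z w v : Fin n}, (orbSetoid S).r z w → (orbSetoid S).r w v →
      (orbSetoid S).r z v := fun h h' => (orbSetoid S).iseqv.trans h h'
  refine card_of_almost_inj_le f hsurj ⟦b⟧ ?_
  rintro ⟨x⟩ ⟨y⟩ hx hy hxy
  have hxb : ¬ (orbSetoid S).r x b := fun hc => hx (Quotient.sound hc)
  have hyb : ¬ (orbSetoid S).r y b := fun hc => hy (Quotient.sound hc)
  have hxy' : (orbSetoid S').r x y := Quotient.exact hxy
  refine Quotient.sound ?_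
  rcases orbRel_insert_cover hxy' with h1 | ⟨h1, h2⟩
  · exact h1
  · have hxa : (orbSetoid S).r x a := h1.resolve_right hxb
    have hya : (orbSetoid S).r y a := h2.resolve_right hyb
    exact htrans hxa (hsymm hya)

/-- Adding a swap joining two distinct orbits strictly decreases the orbit count. -/
theorem nOrb_insert_lt {S : Set (Perm (Fin n))} {a b : Fin n}
    (h : ¬ (orbSetoid S).r a b) : nOrb (insert (Equiv.swap a b) S) < nOrb S := by
  classical
  set S' := insert (Equiv.swap a b) S with hS'
  set f : Quotient (orbSetoid S) → Quotient (orbSetoid S') :=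
    Quotient.lift (fun x => (Quotient.mk (orbSetoid S') x))
      (fun x y hxy => Quotient.sound (orbRel_mono (Set.subset_insert _ _) hxy)) with hf
  have hsurj : Function.Surjective f := by rintro ⟨x⟩; exact ⟨⟦x⟧, rfl⟩
  have hne : (⟦a⟧ : Quotient (orbSetoid S)) ≠ ⟦b⟧ := fun hc => h (Quotient.exact hc)
  have heq : f ⟦a⟧ = f ⟦b⟧ := Quotient.sound
    ⟨Equiv.swap a b, Subgroup.subset_closure (Set.mem_insert _ _), swap_apply_left a b⟩
  exact card_lt_of_surj_not_inj f hsurj ⟦a⟧ ⟦b⟧ hne heq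

theorem setOf_mem_cons (τ : Perm (Fin n)) (L : List (Perm (Fin n))) :
    {τ' | τ' ∈ τ :: L} = insert τ {τ' | τ' ∈ L} := by
  ext g
  simp [List.mem_cons]

theorem ncyc_one : ncyc (1 : Perm (Fin n)) = n := by
  rw [ncyc, card_quotient_of_eq, Nat.card_eq_fintype_card, Fintype.card_fin]
  rintro x y ⟨i, hi⟩
  simpa using hi

theorem nOrb_empty : nOrb (∅ : Set (Perm (Fin n))) = n := by
  rw [nOrb, card_quotient_of_eq, Nat.card_eq_fintype_card, Fintype.card_fin]
  rintro x y ⟨g, hg, rfl⟩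
  rw [Subgroup.closure_empty, Subgroup.mem_bot] at hg
  simp [hg]

/-- The key lower bound: a family of transpositions with product `π` and `t` orbits
satisfies `n + ℓ(π) ≤ |L| + 2t`. -/
theorem lower_bound : ∀ L : List (Perm (Fin n)), (∀ τ ∈ L, Perm.IsSwap τ) →
    n + ncyc L.prod ≤ L.length + 2 * nOrb {τ | τ ∈ L} := by
  intro L
  induction L with
  | nil =>
    intro _
    simp only [List.prod_nil, List.length_nil, zero_add, ncyc_one]
    have : {τ : Perm (Fin n) | τ ∈ ([] : List (Perm (Fin n)))} = ∅ := by simp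
    rw [this, nOrb_empty]
    omega
  | cons τ L ih =>
    intro hswap
    obtain ⟨a, b, hab, rfl⟩ := hswap τ List.mem_cons_self
    have ihL := ih fun τ' hτ' => hswap τ' (List.mem_cons_of_mem _ hτ')
    set S := {τ' : Perm (Fin n) | τ' ∈ L} with hS
    set π' := L.prod with hπ'
    rw [List.prod_cons, List.length_cons, setOf_mem_cons, ← hπ', ← hS]
    by_cases hc : (orbSetoid S).r a b
    · have ht : nOrb (insert (Equiv.swap a b) S) = nOrb S :=
        congrArg (fun s : Setoid (Fin n) => Nat.card (Quotient s)) (orbSetoid_insert_eq hc)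
      rw [ht]
      by_cases hsc : π'.SameCycle a b
      · rw [ncyc_swap_mul hab hsc]; omega
      · have := ncyc_swap_mul_of_not hab hsc; omega
    · have hsc : ¬ π'.SameCycle a b := by
        intro hcon
        have hπ'mem : π' ∈ Subgroup.closure S :=
          list_prod_mem fun g hg => Subgroup.subset_closure hg
        exact hc (orbRel_of_sameCycle hπ'mem hcon)
      have h1 := ncyc_swap_mul_of_not hab hsc
      have h2 := nOrb_le_insert_add_one S a b
      omega

theorem nOrb_pos (hn : 0 < n) (S : Set (Perm (Fin n))) : 0 < nOrb S := by
  have h1 : Nonempty (Fin n) := ⟨⟨0, hn⟩⟩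
  have h2 : Nonempty (Quotient (orbSetoid S)) := Nonempty.map (Quotient.mk _) h1
  exact Nat.card_pos

/-- Phase 1: every permutation has a factorization into `n - ℓ(σ)` transpositions. -/
theorem exists_base_factorization (σ : Perm (Fin n)) :
    ∃ L : List (Perm (Fin n)), (∀ τ ∈ L, Perm.IsSwap τ) ∧ L.prod = σ ∧
      L.length + ncyc σ = n := by
  classical
  suffices h : ∀ (m : ℕ) (σ : Perm (Fin n)), σ.support.card ≤ m →
      ∃ L : List (Perm (Fin n)), (∀ τ ∈ L, Perm.IsSwap τ) ∧ L.prod = σ ∧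
        L.length + ncyc σ = n by
    exact h σ.support.card σ le_rfl
  intro m
  induction m with
  | zero =>
    intro σ hσ
    have : σ = 1 := by
      rw [← Perm.support_eq_empty_iff]
      exact Finset.card_eq_zero.1 (Nat.le_zero.1 hσ)
    subst this
    exact ⟨[], by simp, by simp, by rw [List.length_nil, zero_add]; exact ncyc_one⟩
  | succ m ih =>
    intro σ hσ
    rcases Nat.lt_or_ge σ.support.card (m + 1) with h | h
    · exact ih σ (by omega)
    · have hne : σ.support.Nonempty := Finset.card_pos.1 (by omega)
      obtain ⟨x, hx⟩ := hne
      have hxfix : σ x ≠ x := Perm.mem_support.1 hx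
      set ρ := Equiv.swap x (σ x) * σ with hρ
      have hcard : ρ.support.card < σ.support.card := Perm.card_support_swap_mul hxfix
      obtain ⟨L₁, hL₁s, hL₁p, hL₁l⟩ := ih ρ (by omega)
      have hsc : σ.SameCycle x (σ x) := ⟨1, by simp⟩
      have hncyc : ncyc ρ = ncyc σ + 1 := ncyc_swap_mul (Ne.symm hxfix) hsc
      refine ⟨Equiv.swap x (σ x) :: L₁, ?_, ?_, ?_⟩
      · intro τ hτ
        rcases List.mem_cons.1 hτ with rfl | hτ
        · exact ⟨x, σ x, Ne.symm hxfix, rfl⟩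
        · exact hL₁s τ hτ
      · rw [List.prod_cons, hL₁p, hρ, ← mul_assoc, swap_mul_self, one_mul]
      · rw [List.length_cons]
        omega

/-- Phase 2: a factorization can be completed to a transitive one by adding
`2 (t - 1)` transpositions. -/
theorem exists_connected (hn : 0 < n) (σ : Perm (Fin n)) :
    ∀ (t : ℕ) (L : List (Perm (Fin n))), nOrb {τ | τ ∈ L} ≤ t →
    (∀ τ ∈ L, Perm.IsSwap τ) → L.prod = σ →
    ∃ L' : List (Perm (Fin n)), (∀ τ ∈ L', Perm.IsSwap τ) ∧ L'.prod = σ ∧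
      IsTransitiveFamily L' ∧ L'.length + 2 ≤ L.length + 2 * nOrb {τ | τ ∈ L} := by
  intro t
  induction t with
  | zero =>
    intro L hL _ _
    exfalso
    have : 0 < nOrb {τ | τ ∈ L} := nOrb_pos hn _
    omega
  | succ t ih =>
    intro L hL hswap hprod
    by_cases htr : ∀ x y : Fin n, (orbSetoid {τ | τ ∈ L}).r x y
    · refine ⟨L, hswap, hprod, htr, ?_⟩
      have : 0 < nOrb {τ | τ ∈ L} := nOrb_pos hn _
      omega
    · push_neg at htr
      obtain ⟨x, y, hxy⟩ := htr
      have hxyne : x ≠ y := fun hc => hxy (hc ▸ (orbSetoid _).iseqv.refl x)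
      set L₂ := Equiv.swap x y :: Equiv.swap x y :: L with hL₂
      have hset : {τ | τ ∈ L₂} = insert (Equiv.swap x y) {τ | τ ∈ L} := by
        rw [hL₂, setOf_mem_cons, setOf_mem_cons, Set.insert_idem]
      have hlt : nOrb {τ | τ ∈ L₂} < nOrb {τ | τ ∈ L} := by
        rw [hset]; exact nOrb_insert_lt hxy
      obtain ⟨L', h1, h2, h3, h4⟩ := ih L₂ (by omega)
        (by
          intro τ hτ
          rcases List.mem_cons.1 hτ with rfl | hτ
          · exact ⟨x, y, hxyne, rfl⟩
          rcases List.mem_cons.1 hτ with rfl | hτ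
          · exact ⟨x, y, hxyne, rfl⟩
          · exact hswap τ hτ)
        (by rw [hL₂, List.prod_cons, List.prod_cons, ← mul_assoc, swap_mul_self, one_mul, hprod])
      refine ⟨L', h1, h2, h3, ?_⟩
      have hlen : L₂.length = L.length + 2 := by simp [hL₂]
      omega

/-- The number of orbits of a factorization of `σ` is at most `ℓ(σ)`. -/
theorem nOrb_le_ncyc {L : List (Perm (Fin n))} {σ : Perm (Fin n)} (hprod : L.prod = σ) :
    nOrb {τ | τ ∈ L} ≤ ncyc σ := by
  classical
  have hσ : σ ∈ Subgroup.closure {τ | τ ∈ L} := by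
    rw [← hprod]
    exact list_prod_mem fun g hg => Subgroup.subset_closure hg
  set f : Quotient (scSetoid σ) → Quotient (orbSetoid {τ | τ ∈ L}) :=
    Quotient.lift (fun x => (Quotient.mk (orbSetoid {τ | τ ∈ L}) x))
      (fun x y hxy => Quotient.sound (orbRel_of_sameCycle hσ hxy)) with hf
  have hsurj : Function.Surjective f := by rintro ⟨x⟩; exact ⟨⟦x⟧, rfl⟩
  exact Nat.card_le_card_of_surjective f hsurj

/-- Upper bound: there is a transitive factorization of length `n + ℓ(σ) - 2`. -/
theorem exists_good_factorization (hn : 0 < n) (σ : Perm (Fin n)) :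
    ∃ L' : List (Perm (Fin n)), (∀ τ ∈ L', Perm.IsSwap τ) ∧ L'.prod = σ ∧
      IsTransitiveFamily L' ∧ L'.length + 2 ≤ n + ncyc σ := by
  obtain ⟨L, h1, h2, h3⟩ := exists_base_factorization σ
  obtain ⟨L', h4, h5, h6, h7⟩ := exists_connected hn σ (nOrb {τ | τ ∈ L}) L le_rfl h1 h2
  refine ⟨L', h4, h5, h6, ?_⟩
  have h8 := nOrb_le_ncyc h2
  omega


end CutCase


open CutCase in
/-- If the first transposition `τ₁ = (j₁ j₂)` of a minimal transitive factorization of `σ`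
into transpositions has `j₁, j₂` in the same cycle of `σ`, then in `σ' = τ₁σ` the points
`j₁, j₂` lie in different cycles, `ℓ(σ') = ℓ(σ) + 1`, and the subgroup generated by the
remaining transpositions has exactly two orbits, one containing `j₁` and the other `j₂`. -/
theorem cut_case_of_min_swap_factorization
    (n : ℕ) (σ : Perm (Fin n)) (L : List (Perm (Fin n))) (j₁ j₂ : Fin n) (hj : j₁ ≠ j₂)
    (hmin : IsMinSwapFact σ (Equiv.swap j₁ j₂ :: L))
    (hsame : σ.SameCycle j₁ j₂) :
    ¬ (Equiv.swap j₁ j₂ * σ).SameCycle j₁ j₂ ∧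
    cycleCount (Equiv.swap j₁ j₂ * σ) = cycleCount σ + 1 ∧
    (¬ ∃ g ∈ Subgroup.closure {τ | τ ∈ L}, g j₁ = j₂) ∧
    (∀ x : Fin n,
      (∃ g ∈ Subgroup.closure {τ | τ ∈ L}, g j₁ = x) ∨
      (∃ g ∈ Subgroup.closure {τ | τ ∈ L}, g j₂ = x)) := by
  classical
  obtain ⟨hswaps, hprod, htrans, hminlen⟩ := hmin
  have hn : 0 < n := j₁.pos
  rw [List.prod_cons] at hprod
  have hLprod : L.prod = Equiv.swap j₁ j₂ * σ := by
    rw [← hprod, ← mul_assoc, swap_mul_self, one_mul]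
  set S : Set (Perm (Fin n)) := {τ | τ ∈ L} with hS
  have hswapsL : ∀ τ ∈ L, Perm.IsSwap τ := fun τ hτ => hswaps τ (List.mem_cons_of_mem _ hτ)
  have htrans' : ∀ x y : Fin n, (orbSetoid (insert (Equiv.swap j₁ j₂) S)).r x y := by
    intro x y
    have := htrans x y
    rwa [setOf_mem_cons] at this
  have hsymm : ∀ {z w : Fin n}, (orbSetoid S).r z w → (orbSetoid S).r w z :=
    fun h => (orbSetoid S).iseqv.symm h
  refine ⟨not_sameCycle_swap_mul σ hj hsame, ?_, ?_, ?_⟩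
  · rw [cycleCount_eq_ncyc, cycleCount_eq_ncyc, ncyc_swap_mul hj hsame]
  · rintro ⟨g, hg, hgj⟩
    have hrel : (orbSetoid S).r j₁ j₂ := ⟨g, hg, hgj⟩
    have heq := orbSetoid_insert_eq hrel
    have htransS : ∀ x y : Fin n, (orbSetoid S).r x y := by
      intro x y
      have := htrans' x y
      rwa [heq] at this
    have hsub : Subsingleton (Quotient (orbSetoid S)) := by
      constructor
      rintro ⟨x⟩ ⟨y⟩
      exact Quotient.sound (htransS x y)
    have hle1 : nOrb S ≤ 1 := by
      have := Nat.card_eq_fintype_card (α := Quotient (orbSetoid S))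
      rw [nOrb, this]
      exact Fintype.card_le_one_iff_subsingleton.2 hsub
    have hlow := lower_bound L hswapsL
    rw [hLprod, ncyc_swap_mul hj hsame] at hlow
    obtain ⟨L'', h1, h2, h3, h4⟩ := exists_good_factorization hn σ
    have h5 := hminlen L'' h1 h2 h3
    rw [List.length_cons] at h5
    rw [← hS] at hlow
    omega
  · intro x
    rcases orbRel_insert_cover (htrans' j₁ x) with h1 | ⟨_, h2⟩
    · exact Or.inl h1
    · rcases h2 with h2 | h2
      · exact Or.inl (hsymm h2)
      · exact Or.inr (hsymm h2)
end

section
/- Let (τ₁,…,τ_k) be a minimal transitive factorization of σ ∈ S_n into transpositions, and write τ₁ = (j₁ j₂). If j₁ and j₂ lie in different cycles of σ, then: j₁ and j₂ lie in the same cycle of σ' = τ₁σ = τ₂⋯τ_k; ℓ(σ') = ℓ(σ) − 1; and the subgroup generated by {τ₂,…,τ_k} acts transitively on {1,…,n}. -/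
/-!
Swapping two points `x, y` that lie in different cycles of `σ` splices those two cycles into
one: `swap x y * σ` agrees with `σ` except that the predecessor of `x` is sent to `y` and the
predecessor of `y` to `x`. Every other cycle is untouched, so the number of cycles (fixed points
included) drops by one. For transitivity, `σ' = τ₂ ⋯ τ_k` lies in the group `H` generated by the
remaining transpositions and joins `j₁` to `j₂`, so every `H`-orbit is stable under `τ₁ = (j₁ j₂)`,
hence under the whole (transitive) group generated by `τ₁, …, τ_k`.
-/

open Equiv

open Finset

namespace Equiv.Perm

variable {α : Type*}

theorem pow_apply_eq_of_eqOn_sameCycle {f g : Perm α} {a : α}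
    (h : ∀ b, f.SameCycle a b → f b = g b) (k : ℕ) : (f ^ k) a = (g ^ k) a := by
  induction k with
  | zero => rfl
  | succ k ih =>
    rw [pow_succ', pow_succ', mul_apply, mul_apply, ← ih,
      h _ (sameCycle_pow_right.2 SameCycle.rfl)]

theorem sameCycle_iff_of_forall_pow_apply_eq [Finite α] {f g : Perm α} {a b : α}
    (h : ∀ k : ℕ, (f ^ k) a = (g ^ k) a) : f.SameCycle a b ↔ g.SameCycle a b := by
  constructor <;> intro hab <;> obtain ⟨k, rfl⟩ := hab.exists_nat_pow_eq
  · rw [h]; exact sameCycle_pow_right.2 SameCycle.rfl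
  · rw [← h]; exact sameCycle_pow_right.2 SameCycle.rfl

theorem SameCycle.mem_of_mapsTo [Finite α] {f : Perm α} {s : Set α} {a b : α}
    (hs : Set.MapsTo f s s) (ha : a ∈ s) (hab : f.SameCycle a b) : b ∈ s := by
  obtain ⟨k, rfl⟩ := hab.exists_nat_pow_eq
  clear hab
  induction k with
  | zero => exact ha
  | succ k ih => rw [pow_succ', mul_apply]; exact hs ih

variable [DecidableEq α] {σ : Perm α} {x y a b : α}

theorem swap_mul_apply_of_not_sameCycle (hx : ¬σ.SameCycle a x) (hy : ¬σ.SameCycle a y) :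
    (swap x y * σ) a = σ a :=
  swap_apply_of_ne_of_ne (fun h => hx (h ▸ sameCycle_apply_right.2 SameCycle.rfl))
    (fun h => hy (h ▸ sameCycle_apply_right.2 SameCycle.rfl))

theorem sameCycle_swap_mul_iff_of_not_sameCycle [Finite α]
    (hx : ¬σ.SameCycle a x) (hy : ¬σ.SameCycle a y) :
    (swap x y * σ).SameCycle a b ↔ σ.SameCycle a b :=
  (sameCycle_iff_of_forall_pow_apply_eq <| pow_apply_eq_of_eqOn_sameCycle fun _ hac =>
    (swap_mul_apply_of_not_sameCycle (fun h => hx (hac.trans h))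
      (fun h => hy (hac.trans h))).symm).symm

theorem SameCycle.swap_mul_of_not_sameCycle [Finite α] (h : ¬σ.SameCycle x y)
    (hb : σ.SameCycle x b) : (swap x y * σ).SameCycle x b := by
  obtain ⟨k, rfl⟩ := hb.exists_nat_pow_eq
  clear hb
  induction k with
  | zero => exact SameCycle.rfl
  | succ k ih =>
    rw [pow_succ', mul_apply]
    by_cases hx : σ ((σ ^ k) x) = x
    · rw [hx]
    have hy : σ ((σ ^ k) x) ≠ y := fun hy =>
      h (hy ▸ sameCycle_apply_right.2 (sameCycle_pow_right.2 SameCycle.rfl))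
    have hstep : (swap x y * σ) ((σ ^ k) x) = σ ((σ ^ k) x) := swap_apply_of_ne_of_ne hx hy
    exact hstep ▸ sameCycle_apply_right.2 ih

theorem sameCycle_swap_mul_of_not_sameCycle [Finite α] (h : ¬σ.SameCycle x y) :
    (swap x y * σ).SameCycle x y := by
  have hpred : (swap x y * σ) (σ.symm x) = y := by simp
  have hstep := sameCycle_apply_right.2
    ((sameCycle_symm_apply_right.2 SameCycle.rfl).swap_mul_of_not_sameCycle h)
  rwa [hpred] at hstep

theorem sameCycle_swap_mul_iff [Finite α] (h : ¬σ.SameCycle x y) :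
    (swap x y * σ).SameCycle x b ↔ σ.SameCycle x b ∨ σ.SameCycle y b := by
  constructor
  · refine fun hb => SameCycle.mem_of_mapsTo (s := {c | σ.SameCycle x c ∨ σ.SameCycle y c})
      ?_ (Or.inl SameCycle.rfl) hb
    intro c hc
    have hσc : σ.SameCycle x (σ c) ∨ σ.SameCycle y (σ c) :=
      (show σ.SameCycle x c ∨ σ.SameCycle y c from hc).imp
        sameCycle_apply_right.2 sameCycle_apply_right.2
    rw [mul_apply]
    rcases eq_or_ne (σ c) x with hcx | hcx
    · rw [hcx, swap_apply_left]; exact Or.inr SameCycle.rfl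
    rcases eq_or_ne (σ c) y with hcy | hcy
    · rw [hcy, swap_apply_right]; exact Or.inl SameCycle.rfl
    rwa [swap_apply_of_ne_of_ne hcx hcy]
  · rintro (hb | hb)
    · exact hb.swap_mul_of_not_sameCycle h
    · have hyb := hb.swap_mul_of_not_sameCycle (fun hyx => h hyx.symm)
      rw [swap_comm] at hyb
      exact (sameCycle_swap_mul_of_not_sameCycle h).trans hyb

section Counting

variable [Fintype α]

def cycleClass (σ : Perm α) (a : α) : Finset α := {b | σ.SameCycle a b}

def cycleClasses (σ : Perm α) : Finset (Finset α) := univ.image (cycleClass σ)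

@[simp]
theorem mem_cycleClass : b ∈ cycleClass σ a ↔ σ.SameCycle a b := by simp [cycleClass]

theorem mem_cycleClass_self : a ∈ cycleClass σ a := mem_cycleClass.2 SameCycle.rfl

theorem SameCycle.cycleClass_eq (h : σ.SameCycle a b) : cycleClass σ a = cycleClass σ b := by
  ext c
  simp only [mem_cycleClass]
  exact ⟨h.symm.trans, h.trans⟩

theorem cycleClass_of_apply_eq_self (ha : σ a = a) : cycleClass σ a = {a} := by
  ext b
  simp only [mem_cycleClass, mem_singleton]
  exact ⟨fun h => (h.eq_of_left ha).symm, fun h => h ▸ SameCycle.rfl⟩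

theorem cycleClass_of_mem_support (ha : a ∈ σ.support) :
    cycleClass σ a = (σ.cycleOf a).support := by
  ext b
  rw [mem_cycleClass, mem_support_cycleOf_iff, and_iff_left ha]

theorem image_cycleClass_support (σ : Perm α) :
    σ.support.image (cycleClass σ) = σ.cycleFactorsFinset.image support := by
  ext s
  simp only [mem_image]
  constructor
  · rintro ⟨a, ha, rfl⟩
    exact ⟨σ.cycleOf a, cycleOf_mem_cycleFactorsFinset_iff.2 ha,
      (cycleClass_of_mem_support ha).symm⟩
  · rintro ⟨c, hc, rfl⟩
    obtain ⟨a, ha⟩ := (mem_cycleFactorsFinset_iff.1 hc).1.nonempty_support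
    have haσ := mem_cycleFactorsFinset_support_le hc ha
    exact ⟨a, haσ, by rw [cycleClass_of_mem_support haσ, ← cycle_is_cycleOf ha hc]⟩

theorem card_image_cycleClass_support (σ : Perm α) :
    #(σ.support.image (cycleClass σ)) = Multiset.card σ.cycleType := by
  rw [image_cycleClass_support, card_image_of_injOn, cycleType_def, Multiset.card_map]
  · rfl
  intro c₁ h₁ c₂ h₂ he
  obtain ⟨a, ha⟩ := (mem_cycleFactorsFinset_iff.1 h₁).1.nonempty_support
  have ha₂ : a ∈ c₂.support := he ▸ ha
  rw [cycle_is_cycleOf ha h₁, cycle_is_cycleOf ha₂ h₂]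

theorem card_image_cycleClass_compl_support (σ : Perm α) :
    #(σ.supportᶜ.image (cycleClass σ)) = Fintype.card α - #σ.support := by
  rw [← card_compl, image_congr (g := singleton), card_image_of_injective _ singleton_injective]
  intro a ha
  exact cycleClass_of_apply_eq_self (notMem_support.1 (mem_compl.1 ha))

theorem card_cycleClasses (σ : Perm α) :
    #(cycleClasses σ) = Multiset.card σ.cycleType + (Fintype.card α - #σ.support) := by
  have hdisj :
      _root_.Disjoint (σ.support.image (cycleClass σ)) (σ.supportᶜ.image (cycleClass σ)) := by
    simp only [disjoint_left, mem_image, mem_compl, not_exists, not_and]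
    rintro _ ⟨a, ha, rfl⟩ b hb hba
    exact hb ((mem_cycleClass.1 (hba ▸ mem_cycleClass_self)).mem_support_iff.2 ha)
  rw [cycleClasses, ← union_compl σ.support, image_union, card_union_of_disjoint hdisj,
    card_image_cycleClass_support, card_image_cycleClass_compl_support]

theorem image_cycleClass_cycleClass (σ : Perm α) (a : α) :
    (cycleClass σ a).image (cycleClass σ) = {cycleClass σ a} := by
  rw [image_congr fun b hb => (mem_cycleClass.1 hb).cycleClass_eq.symm]
  exact image_const ⟨a, mem_cycleClass_self⟩ _

theorem cycleClass_swap_mul_of_sameCycle (h : ¬σ.SameCycle x y)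
    (ha : σ.SameCycle x a ∨ σ.SameCycle y a) :
    cycleClass (swap x y * σ) a = cycleClass σ x ∪ cycleClass σ y := by
  rw [← ((sameCycle_swap_mul_iff h).2 ha).cycleClass_eq]
  ext b
  simp only [mem_cycleClass, mem_union, sameCycle_swap_mul_iff h]

theorem cycleClass_swap_mul_of_not_sameCycle (hx : ¬σ.SameCycle a x) (hy : ¬σ.SameCycle a y) :
    cycleClass (swap x y * σ) a = cycleClass σ a := by
  ext b
  simp only [mem_cycleClass, sameCycle_swap_mul_iff_of_not_sameCycle hx hy]

theorem card_cycleClasses_swap_mul (h : ¬σ.SameCycle x y) :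
    #(cycleClasses (swap x y * σ)) + 1 = #(cycleClasses σ) := by
  set U := cycleClass σ x ∪ cycleClass σ y
  have mem_U {a : α} : a ∈ U ↔ σ.SameCycle x a ∨ σ.SameCycle y a := by
    simp only [U, mem_union, mem_cycleClass]
  set R := Uᶜ.image (cycleClass σ)
  have notMem_R : ∀ s ⊆ U, s ∉ R := by
    simp only [R, mem_image, mem_compl, not_exists, not_and]
    intro s hs a ha has
    exact ha (hs (has ▸ mem_cycleClass_self))
  have hσ' : cycleClasses (swap x y * σ) = insert U R := by
    rw [cycleClasses, ← union_compl U, image_union, insert_eq]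
    congr 1
    · rw [image_congr fun a ha => cycleClass_swap_mul_of_sameCycle h (mem_U.1 ha)]
      exact image_const ⟨x, mem_U.2 (Or.inl SameCycle.rfl)⟩ _
    · refine image_congr fun a ha => ?_
      have ha' := mem_U.not.1 (mem_compl.1 ha)
      push Not at ha'
      exact cycleClass_swap_mul_of_not_sameCycle (fun hax => ha'.1 hax.symm)
        (fun hay => ha'.2 hay.symm)
  have hσ : cycleClasses σ = {cycleClass σ x, cycleClass σ y} ∪ R := by
    rw [cycleClasses, ← union_compl U, image_union, image_union, image_cycleClass_cycleClass,
      image_cycleClass_cycleClass]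
    rfl
  have hxy : cycleClass σ x ≠ cycleClass σ y := fun he =>
    h (mem_cycleClass.1 (he ▸ mem_cycleClass_self))
  have hdisj : _root_.Disjoint {cycleClass σ x, cycleClass σ y} R := by
    refine disjoint_left.2 fun s hs => notMem_R s ?_
    rcases mem_insert.1 hs with rfl | hs
    · exact subset_union_left
    · exact mem_singleton.1 hs ▸ subset_union_right
  rw [hσ', hσ, card_insert_of_notMem (notMem_R U subset_rfl), card_union_of_disjoint hdisj,
    card_pair hxy]
  omega

end Counting

end Equiv.Perm

section Transitivity

variable {G X : Type*} [Group G] [MulAction G X]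

theorem exists_mem_closure_smul_eq_of_mem_closure_insert {S : Set G} {τ : G}
    (hτ : ∀ a : X, ∃ h ∈ Subgroup.closure S, h • a = τ • a) {g : G}
    (hg : g ∈ Subgroup.closure (insert τ S)) (a : X) :
    ∃ h ∈ Subgroup.closure S, h • a = g • a := by
  induction hg using Subgroup.closure_induction generalizing a with
  | mem g hg =>
    rcases hg with rfl | hg
    · exact hτ a
    · exact ⟨g, Subgroup.subset_closure hg, rfl⟩
  | one => exact ⟨1, one_mem _, rfl⟩
  | mul g₁ g₂ _ _ ih₁ ih₂ =>
    obtain ⟨h₂, hh₂, e₂⟩ := ih₂ a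
    obtain ⟨h₁, hh₁, e₁⟩ := ih₁ (g₂ • a)
    exact ⟨h₁ * h₂, mul_mem hh₁ hh₂, by rw [mul_smul, e₂, e₁, mul_smul]⟩
  | inv g _ ih =>
    obtain ⟨h, hh, e⟩ := ih (g⁻¹ • a)
    exact ⟨h⁻¹, inv_mem hh, by rw [inv_smul_eq_iff, e, smul_inv_smul]⟩

end Transitivity

theorem exists_mem_apply_eq_swap_apply {α : Type*} [DecidableEq α] {H : Subgroup (Perm α)}
    {x y : α} (hxy : ∃ h ∈ H, h x = y) (a : α) : ∃ h ∈ H, h a = swap x y a := by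
  obtain ⟨h, hh, rfl⟩ := hxy
  rcases eq_or_ne a x with rfl | hax
  · exact ⟨h, hh, (swap_apply_left _ _).symm⟩
  rcases eq_or_ne a (h x) with rfl | hay
  · exact ⟨h⁻¹, inv_mem hh, by rw [swap_apply_right, Perm.inv_eq_iff_eq]⟩
  · exact ⟨1, one_mem H, (swap_apply_of_ne_of_ne hax hay).symm⟩

theorem IsTransitiveFamily.of_cons_swap {n : ℕ} {L : List (Perm (Fin n))} {x y : Fin n}
    (hL : IsTransitiveFamily (swap x y :: L))
    (hxy : ∃ h ∈ Subgroup.closure {τ | τ ∈ L}, h x = y) : IsTransitiveFamily L := by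
  intro a b
  obtain ⟨g, hg, rfl⟩ := hL a b
  have hgen : {τ | τ ∈ swap x y :: L} = insert (swap x y) {τ | τ ∈ L} := by
    ext
    simp
  rw [hgen] at hg
  exact exists_mem_closure_smul_eq_of_mem_closure_insert (exists_mem_apply_eq_swap_apply hxy) hg a

theorem join_case_of_min_swap_factorization_general
    (n : ℕ) (σ : Perm (Fin n)) (L : List (Perm (Fin n))) (j₁ j₂ : Fin n)
    (hmin : IsMinSwapFact σ (Equiv.swap j₁ j₂ :: L))
    (hdiff : ¬ σ.SameCycle j₁ j₂) :
    (Equiv.swap j₁ j₂ * σ).SameCycle j₁ j₂ ∧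
    cycleCount (Equiv.swap j₁ j₂ * σ) = cycleCount σ - 1 ∧
    IsTransitiveFamily L := by
  obtain ⟨-, hprod, htrans, -⟩ := hmin
  have hjoin := Perm.sameCycle_swap_mul_of_not_sameCycle hdiff
  refine ⟨hjoin, ?_, ?_⟩
  · have hcount := Perm.card_cycleClasses_swap_mul hdiff
    rw [Perm.card_cycleClasses, Perm.card_cycleClasses, Fintype.card_fin] at hcount
    unfold cycleCount
    omega
  · have hLprod : L.prod = swap j₁ j₂ * σ := by
      rw [← hprod, List.prod_cons, swap_mul_self_mul]
    obtain ⟨k, hk⟩ := hjoin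
    refine htrans.of_cons_swap ⟨L.prod ^ k, zpow_mem ?_ k, hLprod ▸ hk⟩
    exact Subgroup.list_prod_mem _ fun τ hτ => Subgroup.subset_closure hτ

/-- If the first transposition `τ₁ = (j₁ j₂)` of a minimal transitive factorization of `σ`
into transpositions has `j₁, j₂` in different cycles of `σ`, then in `σ' = τ₁σ` the points
`j₁, j₂` lie in the same cycle, `ℓ(σ') = ℓ(σ) - 1`, and the subgroup generated by the
remaining transpositions still acts transitively on `{1,…,n}`. -/
theorem join_case_of_min_swap_factorization
    (n : ℕ) (σ : Perm (Fin n)) (L : List (Perm (Fin n))) (j₁ j₂ : Fin n) (hj : j₁ ≠ j₂)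
    (hmin : IsMinSwapFact σ (Equiv.swap j₁ j₂ :: L))
    (hdiff : ¬ σ.SameCycle j₁ j₂) :
    (Equiv.swap j₁ j₂ * σ).SameCycle j₁ j₂ ∧
    cycleCount (Equiv.swap j₁ j₂ * σ) = cycleCount σ - 1 ∧
    IsTransitiveFamily L :=
  join_case_of_min_swap_factorization_general n σ L j₁ j₂ hmin hdiff
end

section
/- Let ω = (j₃ j₂ j₁) be a 3-cycle in S_n and σ ∈ S_n, and suppose j₁, j₂, j₃ all lie in one common cycle of σ. If they are in cyclic order j₁, j₂, j₃ (i.e. the least a ≥ 1 with σ^a(j₁) = j₂ is smaller than the least b ≥ 1 with σ^b(j₁) = j₃), then ℓ(ωσ) = ℓ(σ) + 2 and j₁, j₂, j₃ lie in three pairwise distinct cycles of ωσ. If instead they are in cyclic order j₁, j₃, j₂, then ℓ(ωσ) = ℓ(σ) and j₁, j₂, j₃ all lie in one common cycle of ωσ. -/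
open Equiv

/-- `x, y, z` are in cyclic order `x, y, z` in a common cycle of `σ`: the least `a ≥ 1`
with `σ^a x = y` is smaller than the least `b ≥ 1` with `σ^b x = z`. -/
def InCyclicOrder {n : ℕ} (σ : Perm (Fin n)) (x y z : Fin n) : Prop :=
  ∃ a b : ℕ, 0 < a ∧ 0 < b ∧ (σ ^ a) x = y ∧ (σ ^ b) x = z ∧
    (∀ a', 0 < a' → (σ ^ a') x = y → a ≤ a') ∧
    (∀ b', 0 < b' → (σ ^ b') x = z → b ≤ b') ∧ a < b

open Equiv.Perm
set_option linter.unusedSectionVars false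
set_option linter.unusedVariables false

variable {α : Type*} [Fintype α] [DecidableEq α]

section
variable {σ : Perm α} {x y : α}

lemma myPowMod (f : Perm α) (x : α) {a : ℕ} (hfix : (f ^ a) x = x) (k : ℕ) :
    (f ^ k) x = (f ^ (k % a)) x := by
  conv_lhs => rw [← Nat.div_add_mod k a]
  generalize k / a = q
  induction q with
  | zero => simp
  | succ q ih =>
    have : a * (q + 1) + k % a = (a * q + k % a) + a := by ring
    rw [this, pow_add, Perm.mul_apply, hfix, ih]

lemma mySameCycle_iff (f : Perm α) (p q : α) :
    f.SameCycle p q ↔ ∃ k : ℕ, (f ^ k) p = q := by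
  constructor
  · intro h
    obtain ⟨i, _, hi⟩ := h.exists_pow_eq'
    exact ⟨i, hi⟩
  · rintro ⟨k, hk⟩
    exact ⟨(k : ℤ), by simpa using hk⟩

lemma myExistsMinPow (σ : Perm α) (x y : α) (h : ∃ k : ℕ, 0 < k ∧ (σ ^ k) x = y) :
    ∃ a : ℕ, (0 < a ∧ (σ ^ a) x = y) ∧ ∀ k, 0 < k → (σ ^ k) x = y → a ≤ k :=
  ⟨Nat.find h, Nat.find_spec h, fun k hk1 hk2 => Nat.find_min' h ⟨hk1, hk2⟩⟩

lemma myExistsMinPeriod (σ : Perm α) (x : α) :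
    ∃ m : ℕ, (0 < m ∧ (σ ^ m) x = x) ∧ ∀ k, 0 < k → (σ ^ k) x = x → m ≤ k :=
  myExistsMinPow σ x x ⟨orderOf σ, orderOf_pos σ, by rw [pow_orderOf_eq_one]; rfl⟩

lemma mySameCycle_min (σ : Perm α) (h : σ.SameCycle x y) :
    ∃ a : ℕ, (0 < a ∧ (σ ^ a) x = y) ∧ ∀ k, 0 < k → (σ ^ k) x = y → a ≤ k := by
  obtain ⟨i, h1, _, h3⟩ := h.exists_pow_eq''
  exact myExistsMinPow σ x y ⟨i, h1, h3⟩

/-- Core computation for the split case. -/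
lemma myKey (hxy : x ≠ y) {a : ℕ} (ha : 0 < a) (hay : (σ ^ a) x = y)
    (hmin : ∀ k, 0 < k → (σ ^ k) x = y → a ≤ k) :
    ∀ k ≤ a, ((Equiv.swap x y * σ) ^ k) x = if k = a then x else (σ ^ k) x := by
  have haux : ∀ k, 0 < k → k < a → (σ ^ k) x ≠ x ∧ (σ ^ k) x ≠ y := by
    intro k hk0 hka
    constructor
    · intro hfix
      have h1 : (σ ^ (a - k)) x = y := by
        have : ((σ ^ (a - k)) * (σ ^ k)) x = y := by
          rw [← pow_add]; rwa [Nat.sub_add_cancel hka.le]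
        rwa [Perm.mul_apply, hfix] at this
      have := hmin (a - k) (by omega) h1
      omega
    · intro hy
      have := hmin k hk0 hy
      omega
  intro k hk
  induction k with
  | zero => simp [(by omega : 0 ≠ a)]
  | succ k ih =>
    have hka : k < a := by omega
    have ihk := ih (by omega)
    rw [if_neg (by omega)] at ihk
    rw [pow_succ', Perm.mul_apply, ihk, Perm.mul_apply]
    by_cases hkk : k + 1 = a
    · rw [if_pos hkk]
      have : σ ((σ ^ k) x) = y := by
        rw [← Perm.mul_apply, ← pow_succ']; rw [hkk] at *; exact hay
      rw [this, Equiv.swap_apply_right]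
    · rw [if_neg hkk]
      have hs : σ ((σ ^ k) x) = (σ ^ (k + 1)) x := by
        rw [← Perm.mul_apply, ← pow_succ']
      rw [hs]
      obtain ⟨h1, h2⟩ := haux (k + 1) (by omega) (by omega)
      exact Equiv.swap_apply_of_ne_of_ne h1 h2

/-- Orbit description after split. -/
lemma myOrbit (hxy : x ≠ y) {a : ℕ} (ha : 0 < a) (hay : (σ ^ a) x = y)
    (hmin : ∀ k, 0 < k → (σ ^ k) x = y → a ≤ k) (z : α) :
    (Equiv.swap x y * σ).SameCycle x z ↔ ∃ k, k < a ∧ (σ ^ k) x = z := by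
  have hk := myKey hxy ha hay hmin
  have hfix : ((Equiv.swap x y * σ) ^ a) x = x := by
    rw [hk a le_rfl, if_pos rfl]
  constructor
  · rw [mySameCycle_iff]
    rintro ⟨k, rfl⟩
    refine ⟨k % a, Nat.mod_lt _ ha, ?_⟩
    rw [myPowMod _ _ hfix k, hk (k % a) (Nat.mod_lt _ ha).le,
      if_neg (Nat.mod_lt _ ha).ne]
  · rintro ⟨k, hka, rfl⟩
    rw [mySameCycle_iff]
    exact ⟨k, by rw [hk k hka.le, if_neg hka.ne]⟩

lemma myNotSame (hxy : x ≠ y) (h : σ.SameCycle x y) :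
    ¬ (Equiv.swap x y * σ).SameCycle x y := by
  obtain ⟨a, ⟨ha, hay⟩, hmin⟩ := mySameCycle_min σ h
  rw [myOrbit hxy ha hay hmin]
  rintro ⟨k, hka, hky⟩
  rcases Nat.eq_zero_or_pos k with rfl | hk0
  · exact hxy (by simpa using hky)
  · exact absurd (hmin k hk0 hky) (by omega)
end

section
variable {σ : Perm α} {x y p q : α}

/-- Refinement: multiplying by a swap within one cycle only refines cycles. -/
lemma myD (h : σ.SameCycle x y) (hpq : (Equiv.swap x y * σ).SameCycle p q) :
    σ.SameCycle p q := by
  rw [mySameCycle_iff] at hpq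
  obtain ⟨k, rfl⟩ := hpq
  induction k with
  | zero => simp [Perm.SameCycle.refl]
  | succ k ih =>
    rw [pow_succ', Perm.mul_apply, Perm.mul_apply]
    set r := ((Equiv.swap x y * σ) ^ k) p with hr
    have h1 : σ.SameCycle p (σ r) := ih.trans (Perm.sameCycle_apply_right.2 (Perm.SameCycle.refl _ _))
    by_cases hx : σ r = x
    · rw [hx, Equiv.swap_apply_left]
      exact (h1.trans (hx ▸ h : σ.SameCycle (σ r) y))
    · by_cases hy : σ r = y
      · rw [hy, Equiv.swap_apply_right]
        exact h1.trans (hy ▸ h.symm : σ.SameCycle (σ r) x)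
      · rw [Equiv.swap_apply_of_ne_of_ne hx hy]
        exact h1

/-- Locality: cycles not touching `x, y` are unchanged. -/
lemma myC (hpx : ¬ σ.SameCycle p x) (hpy : ¬ σ.SameCycle p y) :
    ((Equiv.swap x y * σ).SameCycle p q ↔ σ.SameCycle p q) := by
  have key : ∀ k : ℕ, ((Equiv.swap x y * σ) ^ k) p = (σ ^ k) p := by
    intro k
    induction k with
    | zero => rfl
    | succ k ih =>
      rw [pow_succ', pow_succ', Perm.mul_apply, Perm.mul_apply, ih, Perm.mul_apply]
      refine Equiv.swap_apply_of_ne_of_ne (fun hx => hpx ?_) fun hy => hpy ?_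
      · exact hx ▸ ⟨(k + 1 : ℕ), by rw [zpow_natCast, pow_succ', Perm.mul_apply]⟩
      · exact hy ▸ ⟨(k + 1 : ℕ), by rw [zpow_natCast, pow_succ', Perm.mul_apply]⟩
  rw [mySameCycle_iff, mySameCycle_iff]
  exact ⟨fun ⟨k, hk⟩ => ⟨k, by rw [← key, hk]⟩, fun ⟨k, hk⟩ => ⟨k, by rw [key, hk]⟩⟩

/-- Merge: a swap across two cycles joins them. -/
lemma myM (hxy : x ≠ y) (h : ¬ σ.SameCycle x y) :
    (Equiv.swap x y * σ).SameCycle x y := by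
  obtain ⟨m, ⟨hm0, hmx⟩, hmmin⟩ := myExistsMinPeriod σ x
  have hney : ∀ k : ℕ, (σ ^ k) x ≠ y := fun k hk => h ⟨(k : ℤ), by simpa using hk⟩
  have key : ∀ k ≤ m, ((Equiv.swap x y * σ) ^ k) x = if k = m then y else (σ ^ k) x := by
    intro k hk
    induction k with
    | zero => rw [if_neg (by omega : (0:ℕ) ≠ m)]; simp
    | succ k ih =>
      have ihk := ih (by omega)
      rw [if_neg (by omega)] at ihk
      rw [pow_succ', Perm.mul_apply, ihk, Perm.mul_apply, ← Perm.mul_apply σ, ← pow_succ']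
      by_cases hkk : k + 1 = m
      · rw [if_pos hkk, hkk, hmx, Equiv.swap_apply_left]
      · rw [if_neg hkk]
        refine Equiv.swap_apply_of_ne_of_ne (fun hfix => ?_) (hney _)
        exact absurd (hmmin (k + 1) (by omega) hfix) (by omega)
  rw [mySameCycle_iff]
  exact ⟨m, by rw [key m le_rfl, if_pos rfl]⟩

/-- Partition: after a split at `x, y`, points of the old cycle lie with `x` or with `y`. -/
lemma myP (hxy : x ≠ y) (h : σ.SameCycle x y) (hp : σ.SameCycle x p) :
    (Equiv.swap x y * σ).SameCycle x p ∨ (Equiv.swap x y * σ).SameCycle y p := by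
  obtain ⟨m, ⟨hm0, hmx⟩, hmmin⟩ := myExistsMinPeriod σ x
  obtain ⟨a, ⟨ha0, hay⟩, hamin⟩ := mySameCycle_min σ h
  have ham : a < m := by
    have h1 : (σ ^ (a % m)) x = y := by rw [← myPowMod σ x hmx a]; exact hay
    have h2 : a % m ≠ 0 := fun h0 => hxy (by rw [h0] at h1; simpa using h1)
    have := hamin (a % m) (Nat.pos_of_ne_zero h2) h1
    have := Nat.mod_le a m
    have := Nat.mod_lt a hm0
    omega
  obtain ⟨k, hkp⟩ := (mySameCycle_iff σ x p).1 hp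
  have hkp' : (σ ^ (k % m)) x = p := by rw [← myPowMod σ x hmx k]; exact hkp
  have hkm : k % m < m := Nat.mod_lt k hm0
  set j := k % m with hj
  by_cases hja : j < a
  · left
    rw [myOrbit hxy ha0 hay hamin]
    exact ⟨j, hja, hkp'⟩
  · right
    push_neg at hja
    -- p = σ^(j-a) y, and j - a is below the minimal return index from y to x
    have hd : (σ ^ (j - a)) y = p := by
      rw [← hay, ← Perm.mul_apply, ← pow_add]
      rwa [Nat.sub_add_cancel hja]
    have hex : ∃ k : ℕ, 0 < k ∧ (σ ^ k) y = x := by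
      refine ⟨m - a, by omega, ?_⟩
      rw [← hay, ← Perm.mul_apply, ← pow_add, Nat.sub_add_cancel ham.le, hmx]
    obtain ⟨a', ⟨ha'0, ha'x⟩, ha'min⟩ := myExistsMinPow σ y x hex
    have hda' : j - a < a' := by
      by_contra hcon
      push_neg at hcon
      have : (σ ^ (a' + a)) x = x := by
        rw [pow_add, Perm.mul_apply, hay, ha'x]
      have := hmmin (a' + a) (by omega) this
      omega
    have := myOrbit (σ := σ) hxy.symm ha'0 ha'x ha'min p
    rw [Equiv.swap_comm] at this
    exact this.2 ⟨j - a, hda', hd⟩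
end

/-- The setoid of `SameCycle`. -/
def scSetoid (σ : Perm α) : Setoid α :=
  ⟨σ.SameCycle, ⟨fun z => Perm.SameCycle.refl σ z, Perm.SameCycle.symm, Perm.SameCycle.trans⟩⟩

lemma myFixEq {σ : Perm α} {z w : α} (h : σ.SameCycle z w) (hz : σ z = z) : w = z := by
  obtain ⟨i, hi⟩ := h
  rw [← hi, Perm.zpow_apply_eq_self_of_apply_eq_self hz]

lemma myCountEq {n : ℕ} (σ : Perm (Fin n)) :
    cycleCount σ = Nat.card (Quotient (scSetoid σ)) := by
  classical
  let f0 : Fin n → {c // c ∈ σ.cycleFactorsFinset} ⊕ {z : Fin n // z ∉ σ.support} :=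
    fun z =>
      if h : z ∈ σ.support then
        Sum.inl ⟨σ.cycleOf z, Perm.cycleOf_mem_cycleFactorsFinset_iff.2 h⟩
      else Sum.inr ⟨z, h⟩
  have hwd : ∀ z w : Fin n, σ.SameCycle z w → f0 z = f0 w := by
    intro z w h
    by_cases hz : z ∈ σ.support
    · have hw : w ∈ σ.support := by
        by_contra hw
        have hzw : z = w := myFixEq h.symm (Perm.notMem_support.1 hw)
        rw [hzw] at hz
        exact hw hz
      simp only [f0, dif_pos hz, dif_pos hw]
      exact congrArg _ (Subtype.ext h.cycleOf_eq)
    · have hzw : w = z := myFixEq h (Perm.notMem_support.1 hz)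
      subst hzw; rfl
  let f : Quotient (scSetoid σ) → {c // c ∈ σ.cycleFactorsFinset} ⊕ {z : Fin n // z ∉ σ.support} :=
    Quotient.lift f0 hwd
  have hinj : Function.Injective f := by
    rintro ⟨p⟩ ⟨q⟩ heq
    refine Quotient.sound ?_
    change f0 p = f0 q at heq
    by_cases hp : p ∈ σ.support <;> by_cases hq : q ∈ σ.support
    · simp only [f0, dif_pos hp, dif_pos hq, Sum.inl.injEq, Subtype.mk.injEq] at heq
      have hq' : q ∈ (σ.cycleOf q).support :=
        Perm.mem_support_cycleOf_iff.2 ⟨Perm.SameCycle.refl σ q, hq⟩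
      rw [← heq] at hq'
      exact (Perm.mem_support_cycleOf_iff.1 hq').1
    · simp only [f0, dif_pos hp, dif_neg hq] at heq
      cases heq
    · simp only [f0, dif_neg hp, dif_pos hq] at heq
      cases heq
    · simp only [f0, dif_neg hp, dif_neg hq, Sum.inr.injEq, Subtype.mk.injEq] at heq
      exact heq ▸ Perm.SameCycle.refl σ p
  have hsurj : Function.Surjective f := by
    rintro (⟨c, hc⟩ | ⟨z, hz⟩)
    · have hcy : c.IsCycle := (Perm.mem_cycleFactorsFinset_iff.1 hc).1
      obtain ⟨z, hz1, -⟩ := hcy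
      have hzc : z ∈ c.support := Perm.mem_support.2 hz1
      have hzs : z ∈ σ.support := by
        rw [Perm.mem_support, ← (Perm.mem_cycleFactorsFinset_iff.1 hc).2 z hzc]
        exact hz1
      refine ⟨⟦z⟧, ?_⟩
      show f0 z = _
      simp only [f0, dif_pos hzs]
      exact congrArg _ (Subtype.ext (Perm.cycle_is_cycleOf hzc hc).symm)
    · exact ⟨⟦z⟧, by show f0 z = _; simp only [f0, dif_neg hz]⟩
  rw [Nat.card_congr (Equiv.ofBijective f ⟨hinj, hsurj⟩), Nat.card_sum,
    Nat.card_eq_fintype_card, Nat.card_eq_fintype_card, Fintype.card_coe,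
    Fintype.card_subtype_compl, Fintype.card_coe, Fintype.card_fin]
  have : σ.cycleType.card = σ.cycleFactorsFinset.card := by
    rw [Perm.cycleType_def, Multiset.card_map]; rfl
  rw [cycleCount, this]

lemma mySplitCount {n : ℕ} {σ : Perm (Fin n)} {x y : Fin n} (hxy : x ≠ y)
    (h : σ.SameCycle x y) :
    cycleCount (Equiv.swap x y * σ) = cycleCount σ + 1 := by
  classical
  set τ : Perm (Fin n) := Equiv.swap x y * σ with hτ
  let f1 : Fin n → Option (Quotient (scSetoid σ)) :=
    fun p => if τ.SameCycle y p then none else some (⟦p⟧ : Quotient (scSetoid σ))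
  have hwd : ∀ p q : Fin n, τ.SameCycle p q → f1 p = f1 q := by
    intro p q hpq
    simp only [f1]
    by_cases c1 : τ.SameCycle y p
    · rw [if_pos c1, if_pos (c1.trans hpq)]
    · rw [if_neg c1, if_neg (fun c2 => c1 (c2.trans hpq.symm))]
      exact congrArg _ (Quotient.sound (myD h hpq))
  let f : Quotient (scSetoid τ) → Option (Quotient (scSetoid σ)) := Quotient.lift f1 hwd
  have hinj : Function.Injective f := by
    rintro ⟨p⟩ ⟨q⟩ heq
    refine Quotient.sound ?_
    change f1 p = f1 q at heq
    by_cases c1 : τ.SameCycle y p <;> by_cases c2 : τ.SameCycle y q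
    · exact c1.symm.trans c2
    · simp only [f1, if_pos c1, if_neg c2] at heq
      cases heq
    · simp only [f1, if_neg c1, if_pos c2] at heq
      cases heq
    · simp only [f1, if_neg c1, if_neg c2, Option.some.injEq] at heq
      have hpq : σ.SameCycle p q := Quotient.exact heq
      by_cases hpx : σ.SameCycle p x
      · have h1 := myP hxy h hpx.symm
        have hxp : τ.SameCycle x p := h1.resolve_right fun hc => c1 hc
        have h2 := myP hxy h (hpx.symm.trans hpq)
        have hxq : τ.SameCycle x q := h2.resolve_right fun hc => c2 hc
        exact hxp.symm.trans hxq
      · have hpy : ¬ σ.SameCycle p y := fun hpy => hpx (hpy.trans h.symm)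
        exact (myC hpx hpy).2 hpq
  have hsurj : Function.Surjective f := by
    rintro (_ | t)
    · exact ⟨⟦y⟧, by show f1 y = _; simp only [f1]; rw [if_pos (Perm.SameCycle.refl τ y)]⟩
    · obtain ⟨p⟩ := t
      by_cases hy : τ.SameCycle y p
      · refine ⟨⟦x⟧, ?_⟩
        show f1 x = _
        simp only [f1]
        rw [if_neg (fun hc : τ.SameCycle y x => myNotSame hxy h hc.symm)]
        exact congrArg _ (Quotient.sound (h.trans (myD h hy)))
      · exact ⟨⟦p⟧, by show f1 p = _; simp only [f1]; rw [if_neg hy]; rfl⟩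
  have hcard : Nat.card (Quotient (scSetoid τ)) = Nat.card (Quotient (scSetoid σ)) + 1 := by
    rw [Nat.card_congr (Equiv.ofBijective f ⟨hinj, hsurj⟩),
      Nat.card_congr (Equiv.optionEquivSumPUnit.{0,0} (Quotient (scSetoid σ))), Nat.card_sum]
    simp
  rw [myCountEq, myCountEq, hcard]

/-- Let `ω = (j₃ j₂ j₁)` (sending `j₃ ↦ j₂ ↦ j₁ ↦ j₃`) and suppose `j₁, j₂, j₃` lie in a
common cycle of `σ`. If they are in cyclic order `j₁, j₂, j₃` then `ℓ(ωσ) = ℓ(σ) + 2` and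
they lie in three pairwise distinct cycles of `ωσ`; if they are in cyclic order
`j₁, j₃, j₂` then `ℓ(ωσ) = ℓ(σ)` and they stay in one common cycle of `ωσ`. -/
theorem threeCycle_mul_case_common_cycle
    (n : ℕ) (σ ω : Perm (Fin n)) (j₁ j₂ j₃ : Fin n)
    (h12 : j₁ ≠ j₂) (h13 : j₁ ≠ j₃) (h23 : j₂ ≠ j₃)
    (hω : ω = Equiv.swap j₃ j₂ * Equiv.swap j₂ j₁)
    (hc12 : σ.SameCycle j₁ j₂) (hc13 : σ.SameCycle j₁ j₃) :
    (InCyclicOrder σ j₁ j₂ j₃ →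
      cycleCount (ω * σ) = cycleCount σ + 2 ∧
      ¬ (ω * σ).SameCycle j₁ j₂ ∧ ¬ (ω * σ).SameCycle j₁ j₃ ∧ ¬ (ω * σ).SameCycle j₂ j₃) ∧
    (InCyclicOrder σ j₁ j₃ j₂ →
      cycleCount (ω * σ) = cycleCount σ ∧
      (ω * σ).SameCycle j₁ j₂ ∧ (ω * σ).SameCycle j₁ j₃ ∧ (ω * σ).SameCycle j₂ j₃) := by
  have hωσ : ω * σ = Equiv.swap j₂ j₃ * (Equiv.swap j₁ j₂ * σ) := by
    rw [hω, Equiv.swap_comm j₃ j₂, Equiv.swap_comm j₂ j₁, mul_assoc]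
  set σ' : Perm (Fin n) := Equiv.swap j₁ j₂ * σ with hσ'
  have hn12' : ¬ σ'.SameCycle j₁ j₂ := myNotSame h12 hc12
  have hcount1 : cycleCount σ' = cycleCount σ + 1 := mySplitCount h12 hc12
  constructor
  · rintro ⟨a, b, ha, hb, ha2, hb3, hamin, hbmin, hab⟩
    have hn13' : ¬ σ'.SameCycle j₁ j₃ := by
      rw [hσ', myOrbit h12 ha ha2 hamin]
      rintro ⟨k, hka, hk3⟩
      rcases Nat.eq_zero_or_pos k with rfl | hk0
      · exact h13 (by simpa using hk3)
      · have := hbmin k hk0 hk3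
        omega
    have h23' : σ'.SameCycle j₂ j₃ := by
      have := myP h12 hc12 hc13
      rw [← hσ'] at this
      exact this.resolve_left hn13'
    have hcount2 : cycleCount (Equiv.swap j₂ j₃ * σ') = cycleCount σ' + 1 :=
      mySplitCount h23 h23'
    refine ⟨by rw [hωσ, hcount2, hcount1], ?_, ?_, ?_⟩
    · rw [hωσ, myC hn12' hn13']
      exact hn12'
    · rw [hωσ, myC hn12' hn13']
      exact hn13'
    · rw [hωσ]
      exact myNotSame h23 h23'
  · rintro ⟨a, b, ha, hb, ha3, hb2, hamin, hbmin, hab⟩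
    have h13' : σ'.SameCycle j₁ j₃ := by
      rw [hσ', myOrbit h12 hb hb2 hbmin]
      exact ⟨a, hab, ha3⟩
    have hn23' : ¬ σ'.SameCycle j₂ j₃ := fun hc => hn12' (h13'.trans hc.symm)
    have h23'' : (Equiv.swap j₂ j₃ * σ').SameCycle j₂ j₃ := myM h23 hn23'
    set σ'' : Perm (Fin n) := Equiv.swap j₂ j₃ * σ' with hσ''
    have hss : Equiv.swap j₂ j₃ * σ'' = σ' := by
      rw [hσ'', ← mul_assoc, Equiv.swap_mul_self, one_mul]
    have hcount2 : cycleCount σ' = cycleCount σ'' + 1 := by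
      have := mySplitCount h23 h23''
      rwa [hss] at this
    have hmono : ∀ p q : Fin n, σ'.SameCycle p q → σ''.SameCycle p q := by
      intro p q hpq
      exact myD h23'' (by rwa [hss])
    have h13'' : σ''.SameCycle j₁ j₃ := hmono _ _ h13'
    have h12'' : σ''.SameCycle j₁ j₂ := h13''.trans h23''.symm
    exact ⟨by rw [hωσ]; exact Nat.add_right_cancel (hcount2.symm.trans hcount1), by rw [hωσ]; exact h12'',
      by rw [hωσ]; exact h13'', by rw [hωσ]; exact h23''⟩
end

section
/- Let n ≥ 3 be odd and let σ ∈ S_n be an n-cycle. Then σ admits a transitive factorization into 3-cycles, and the minimal number of 3-cycles in a transitive factorization of σ is (n−1)/2. -/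
/-!
A cycle on `2m + 1` points is a product of `m` three-cycles: writing `y = σ x`, `z = σ y`,
we have `σ = (x y z) * τ` with `τ` a cycle on the remaining `2m - 1` points, and the powers
of `σ` alone already act transitively.

For the lower bound, let `P_π v = v ∘ π` and consider the rank of `P_π - 1` on `ℚⁿ`. It is
subadditive, since `P_{στ} - 1 = P_τ (P_σ - 1) + (P_τ - 1)`; it is at most `1` for a
transposition, hence at most `2` for a three-cycle; and for an `n`-cycle its kernel consists
of the constant vectors, so it equals `n - 1`. Hence at least `(n - 1) / 2` three-cycles are
needed.
-/

open Equiv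

/-- `L` is a transitive factorization of `σ` into 3-cycles. -/
def IsTransFact3 {n : ℕ} (σ : Perm (Fin n)) (L : List (Perm (Fin n))) : Prop :=
  (∀ δ ∈ L, δ.IsThreeCycle) ∧ L.prod = σ ∧ IsTransitiveFamily L

open Equiv.Perm Module

namespace Equiv.Perm

section Cycles

variable {α : Type*} [DecidableEq α] [Fintype α] {σ : Perm α} {x : α}

theorem IsCycle.apply_apply_ne_self (hσ : σ.IsCycle) (h3 : 3 ≤ σ.support.card)
    (hx : x ∈ σ.support) : σ (σ x) ≠ x := by
  intro hxx
  have hswap := hσ.eq_swap_of_apply_apply_eq_self (mem_support.mp hx) hxx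
  rw [hswap, card_support_swap (mem_support.mp hx).symm] at h3
  omega

theorem IsCycle.isCycle_swap_apply_mul (hσ : σ.IsCycle) (h3 : 3 ≤ σ.support.card)
    (hx : x ∈ σ.support) : (swap x (σ x) * σ).IsCycle :=
  hσ.swap_mul (mem_support.mp hx) (hσ.apply_apply_ne_self h3 hx)

theorem IsCycle.support_swap_apply_mul (hσ : σ.IsCycle) (h3 : 3 ≤ σ.support.card)
    (hx : x ∈ σ.support) : (swap x (σ x) * σ).support = σ.support.erase x := by
  rw [support_swap_mul_eq σ x (hσ.apply_apply_ne_self h3 hx), Finset.sdiff_singleton_eq_erase]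

theorem IsThreeCycle.exists_isSwap_mul_isSwap {δ : Perm α} (hδ : δ.IsThreeCycle) :
    ∃ τ₁ τ₂ : Perm α, τ₁.IsSwap ∧ τ₂.IsSwap ∧ τ₁ * τ₂ = δ := by
  have h3 : 3 ≤ δ.support.card := hδ.card_support.ge
  obtain ⟨x, hx⟩ := hδ.isCycle.nonempty_support
  refine ⟨swap x (δ x), swap x (δ x) * δ, ⟨x, δ x, (mem_support.mp hx).symm, rfl⟩, ?_,
    swap_mul_self_mul _ _ _⟩
  rw [← card_support_eq_two, hδ.isCycle.support_swap_apply_mul h3 hx,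
    Finset.card_erase_of_mem hx, hδ.card_support]

theorem IsCycle.exists_isThreeCycle_mul (hσ : σ.IsCycle) (h5 : 5 ≤ σ.support.card) :
    ∃ δ τ : Perm α, δ.IsThreeCycle ∧ τ.IsCycle ∧ τ.support.card + 2 = σ.support.card ∧
      δ * τ = σ := by
  obtain ⟨x, hx⟩ := hσ.nonempty_support
  set τ₁ := swap x (σ x) * σ with hτ₁
  have hτ₁supp : τ₁.support = σ.support.erase x := hσ.support_swap_apply_mul (by omega) hx
  have hτ₁cyc : τ₁.IsCycle := hσ.isCycle_swap_apply_mul (by omega) hx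
  have hτ₁card : τ₁.support.card + 1 = σ.support.card := by
    rw [hτ₁supp, Finset.card_erase_add_one hx]
  have hy : σ x ∈ τ₁.support := by
    rw [hτ₁supp]
    exact Finset.mem_erase.mpr ⟨mem_support.mp hx, apply_mem_support.mpr hx⟩
  set τ₂ := swap (σ x) (τ₁ (σ x)) * τ₁ with hτ₂
  have hτ₂supp : τ₂.support = τ₁.support.erase (σ x) :=
    hτ₁cyc.support_swap_apply_mul (by omega) hy
  have hx₁ : x ∉ τ₁.support := by simp [hτ₁supp]
  have hz : τ₁ (σ x) ∈ τ₁.support := apply_mem_support.mpr hy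
  refine ⟨swap x (σ x) * swap (σ x) (τ₁ (σ x)), τ₂, ?_,
    hτ₁cyc.isCycle_swap_apply_mul (by omega) hy, ?_, ?_⟩
  · rw [swap_comm x]
    exact isThreeCycle_swap_mul_swap_same (mem_support.mp hx)
      (mem_support.mp hy).symm (fun h => hx₁ (h ▸ hz))
  · rw [hτ₂supp, ← hτ₁card, ← Finset.card_erase_add_one hy]
  · rw [mul_assoc, hτ₂, swap_mul_self_mul, hτ₁, swap_mul_self_mul]

theorem IsCycle.exists_list_isThreeCycle_prod {m : ℕ} (hσ : σ.IsCycle)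
    (hcard : σ.support.card = 2 * m + 1) :
    ∃ L : List (Perm α), (∀ δ ∈ L, δ.IsThreeCycle) ∧ L.prod = σ ∧ L.length = m := by
  induction m generalizing σ with
  | zero => have := hσ.two_le_card_support; omega
  | succ m ih =>
    rcases Nat.eq_zero_or_pos m with rfl | hm
    · exact ⟨[σ], by simpa using card_support_eq_three_iff.mp hcard, by simp, rfl⟩
    obtain ⟨δ, τ, hδ, hτ, hτcard, rfl⟩ := hσ.exists_isThreeCycle_mul (by omega)
    obtain ⟨L, hL, hprod, hlen⟩ := ih hτ (by omega)
    refine ⟨δ :: L, ?_, by rw [List.prod_cons, hprod], by rw [List.length_cons, hlen]⟩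
    exact List.forall_mem_cons.mpr ⟨hδ, hL⟩

end Cycles

section Displacement

variable (K : Type*) [Field K] {α : Type*}

def displacement (π : Perm α) : (α → K) →ₗ[K] (α → K) :=
  LinearMap.funLeft K K π - LinearMap.id

noncomputable def displacementRank (π : Perm α) : ℕ :=
  finrank K (LinearMap.range (displacement K π))

variable {K}

@[simp]
theorem displacement_apply (π : Perm α) (v : α → K) (x : α) :
    displacement K π v x = v (π x) - v x := rfl

theorem displacement_mul (σ τ : Perm α) :
    displacement K (σ * τ) =
      LinearMap.funLeft K K τ ∘ₗ displacement K σ + displacement K τ := by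
  ext v x
  simp [LinearMap.funLeft_apply]

@[simp]
theorem displacement_one : displacement K (1 : Perm α) = 0 := by
  ext v x
  simp

variable (K)

theorem displacementRank_swap_le [DecidableEq α] (a b : α) :
    displacementRank K (swap a b) ≤ 1 := by
  have hle : LinearMap.range (displacement K (swap a b)) ≤
      K ∙ (Pi.single a 1 - Pi.single b 1 : α → K) := by
    rintro _ ⟨v, rfl⟩
    refine Submodule.mem_span_singleton.mpr ⟨v b - v a, ?_⟩
    ext x
    by_cases hxa : x = a <;> by_cases hxb : x = b <;>
      simp_all [swap_apply_of_ne_of_ne]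
  exact (Submodule.finrank_mono hle).trans ((finrank_span_le_card _).trans (by simp))

variable [Fintype α]

theorem displacementRank_mul_le (σ τ : Perm α) :
    displacementRank K (σ * τ) ≤ displacementRank K σ + displacementRank K τ := by
  have hle : LinearMap.range (displacement K (σ * τ)) ≤
      (LinearMap.range (displacement K σ)).map (LinearMap.funLeft K K τ) ⊔
        LinearMap.range (displacement K τ) := by
    rintro _ ⟨v, rfl⟩
    rw [displacement_mul]
    exact Submodule.add_mem_sup ⟨_, ⟨v, rfl⟩, rfl⟩ ⟨v, rfl⟩
  calc displacementRank K (σ * τ)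
      ≤ finrank K ((LinearMap.range (displacement K σ)).map (LinearMap.funLeft K K τ) ⊔
          LinearMap.range (displacement K τ) : Submodule K (α → K)) :=
        Submodule.finrank_mono hle
    _ ≤ _ := Submodule.finrank_add_le_finrank_add_finrank _ _
    _ ≤ _ := Nat.add_le_add_right (Submodule.finrank_map_le _ _) _

theorem displacementRank_list_prod_le (L : List (Perm α)) :
    displacementRank K L.prod ≤ (L.map (displacementRank K)).sum := by
  induction L with
  | nil =>
    rw [List.prod_nil, displacementRank, displacement_one, LinearMap.range_zero, finrank_bot]
    exact Nat.zero_le _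
  | cons π L ih =>
    rw [List.prod_cons, List.map_cons, List.sum_cons]
    exact (displacementRank_mul_le K π L.prod).trans (Nat.add_le_add_left ih _)

theorem IsThreeCycle.displacementRank_le [DecidableEq α] {δ : Perm α} (hδ : δ.IsThreeCycle) :
    displacementRank K δ ≤ 2 := by
  obtain ⟨_, _, ⟨a, b, -, rfl⟩, ⟨c, d, -, rfl⟩, rfl⟩ := hδ.exists_isSwap_mul_isSwap
  exact (displacementRank_mul_le K _ _).trans
    (Nat.add_le_add (displacementRank_swap_le K a b) (displacementRank_swap_le K c d))

theorem displacementRank_list_prod_le_two_mul [DecidableEq α] {L : List (Perm α)}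
    (hL : ∀ δ ∈ L, δ.IsThreeCycle) : displacementRank K L.prod ≤ 2 * L.length := by
  refine (displacementRank_list_prod_le K L).trans ?_
  simpa [mul_comm] using List.sum_le_card_nsmul (L.map (displacementRank K)) 2
    (by simpa using fun δ hδ => (hL δ hδ).displacementRank_le K)

theorem IsCycle.card_sub_one_le_displacementRank [DecidableEq α] {σ : Perm α}
    (hσ : σ.IsCycle) (hσ_univ : σ.support = Finset.univ) :
    Fintype.card α - 1 ≤ displacementRank K σ := by
  obtain ⟨x₀, -⟩ := hσ.nonempty_support
  have hker : LinearMap.ker (displacement K σ) ≤ K ∙ (fun _ => 1 : α → K) := by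
    intro v hv
    have hinv : ∀ y, v (σ y) = v y := fun y => sub_eq_zero.mp (congrFun hv y)
    have hconst : ∀ y, v y = v x₀ := by
      intro y
      obtain ⟨i, rfl⟩ := hσ.exists_pow_eq (x := x₀) (y := y)
        (mem_support.mp (hσ_univ ▸ Finset.mem_univ _))
        (mem_support.mp (hσ_univ ▸ Finset.mem_univ _))
      induction i with
      | zero => rfl
      | succ i ih => rw [pow_succ', mul_apply, hinv, ih]
    exact Submodule.mem_span_singleton.mpr ⟨v x₀, funext fun y => by simp [hconst y]⟩
  have hker_le : finrank K (LinearMap.ker (displacement K σ)) ≤ 1 :=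
    (Submodule.finrank_mono hker).trans ((finrank_span_le_card _).trans (by simp))
  have := LinearMap.finrank_range_add_finrank_ker (displacement K σ)
  rw [finrank_fintype_fun_eq_card] at this
  unfold displacementRank
  omega

end Displacement

end Equiv.Perm

theorem isTransitiveFamily_of_isCycle_prod {n : ℕ} {L : List (Perm (Fin n))}
    (hσ : L.prod.IsCycle) (hσ_univ : L.prod.support = Finset.univ) : IsTransitiveFamily L := by
  intro x y
  obtain ⟨i, hi⟩ := hσ.exists_pow_eq (mem_support.mp (hσ_univ ▸ Finset.mem_univ x))
    (mem_support.mp (hσ_univ ▸ Finset.mem_univ y))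
  exact ⟨L.prod ^ i, Subgroup.pow_mem _
    (Subgroup.list_prod_mem _ fun _ hτ => Subgroup.subset_closure hτ) i, hi⟩

theorem min_threeCycle_factorization_of_n_cycle_general
    (n : ℕ) (hodd : Odd n) (σ : Perm (Fin n))
    (hcyc : σ.IsCycle) (hsupp : σ.support.card = n) :
    (∃ L : List (Perm (Fin n)), IsTransFact3 σ L ∧ L.length = (n - 1) / 2) ∧
    (∀ L : List (Perm (Fin n)), IsTransFact3 σ L → (n - 1) / 2 ≤ L.length) := by
  have huniv : σ.support = Finset.univ := Finset.eq_univ_of_card _ (by simpa using hsupp)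
  obtain ⟨m, rfl⟩ := hodd
  rw [show (2 * m + 1 - 1) / 2 = m by omega]
  refine ⟨?_, fun L ⟨hL, hprod, _⟩ => ?_⟩
  · obtain ⟨L, hL, rfl, hlen⟩ := hcyc.exists_list_isThreeCycle_prod hsupp
    exact ⟨L, ⟨hL, rfl, isTransitiveFamily_of_isCycle_prod hcyc huniv⟩, hlen⟩
  · have hlower := hcyc.card_sub_one_le_displacementRank ℚ huniv
    have hupper := displacementRank_list_prod_le_two_mul ℚ hL
    rw [hprod] at hupper
    rw [Fintype.card_fin] at hlower
    omega

/-- For odd `n ≥ 3`, an `n`-cycle `σ` admits a transitive factorization into 3-cycles,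
and the minimal number of 3-cycles in such a factorization is `(n-1)/2`. -/
theorem min_threeCycle_factorization_of_n_cycle
    (n : ℕ) (hn : 3 ≤ n) (hodd : Odd n) (σ : Perm (Fin n))
    (hcyc : σ.IsCycle) (hsupp : σ.support.card = n) :
    (∃ L : List (Perm (Fin n)), IsTransFact3 σ L ∧ L.length = (n - 1) / 2) ∧
    (∀ L : List (Perm (Fin n)), IsTransFact3 σ L → (n - 1) / 2 ≤ L.length) :=
  min_threeCycle_factorization_of_n_cycle_general n hodd σ hcyc hsupp
end

section
/- Let n ≥ 4 be even and let σ ∈ S_n be a permutation with exactly two disjoint cycles, i.e. ℓ(σ) = 2 (σ is a product of two disjoint cycles together covering {1,…,n}, counting a fixed point as a cycle of length 1). Then σ admits a transitive factorization into 3-cycles, and the minimal number of 3-cycles in a transitive factorization of σ is n/2. -/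
open Equiv

/-!
A 3-cycle `δ` with `v ∈ δ.support` is the product of the transpositions `(v δv)` and
`(δv δ²v)`, so a transitive family of `k` 3-cycles gives a connected graph with at most `2k`
edges on the `n` points; hence `n ≤ 2k + 1`.

Conversely, list the two cycles of `σ` as `(a b l…)` and `(c m…)`. Then
`σ = (a b c) · (b l… c m…)`, and the `(n-1)`-cycle on the right splits as
`(b x₁ x₂)(x₂ x₃ x₄)⋯` into `(n-2)/2` 3-cycles. The subgroup they generate contains that
`(n-1)`-cycle, which together with `(a b c)` moves every point to `b`.
-/

open Equiv.Perm

section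

variable {α : Type*} [DecidableEq α]

theorem reachable_apply_of_mem_closure_swaps (E : List (α × α)) {g : Perm α}
    (hg : g ∈ Subgroup.closure {σ | σ ∈ E.map fun p => swap p.1 p.2}) (x : α) :
    (SimpleGraph.fromEdgeSet {e | e ∈ E.map fun p => s(p.1, p.2)}).Reachable x (g x) := by
  set G := SimpleGraph.fromEdgeSet {e | e ∈ E.map fun p => s(p.1, p.2)}
  induction hg using Subgroup.closure_induction generalizing x with
  | mem σ hσ =>
    obtain ⟨⟨a, b⟩, hab, rfl⟩ := List.mem_map.mp hσ
    have hedge : G.Reachable a b := by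
      by_cases h : a = b
      · rw [h]
      · exact SimpleGraph.Adj.reachable <|
          (SimpleGraph.fromEdgeSet_adj _).mpr ⟨List.mem_map_of_mem hab, h⟩
    show G.Reachable x (swap a b x)
    rcases eq_or_ne x a with rfl | hxa
    · rwa [swap_apply_left]
    rcases eq_or_ne x b with rfl | hxb
    · rw [swap_apply_right]; exact hedge.symm
    · rw [swap_apply_of_ne_of_ne hxa hxb]
  | one => rfl
  | mul g h _ _ ihg ihh => exact (ihh x).trans (ihg (h x))
  | inv g _ ih => simpa using (ih (g⁻¹ x)).symm

theorem card_le_length_add_one_of_swaps [Fintype α] (E : List (α × α))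
    (htrans : ∀ x y : α,
      ∃ g ∈ Subgroup.closure {σ | σ ∈ E.map fun p => swap p.1 p.2}, g x = y) :
    Fintype.card α ≤ E.length + 1 := by
  rcases isEmpty_or_nonempty α with hα | hα
  · simp
  set G := SimpleGraph.fromEdgeSet {e | e ∈ E.map fun p => s(p.1, p.2)}
  have hG : G.Connected := by
    refine ⟨fun x y => ?_⟩
    obtain ⟨g, hg, rfl⟩ := htrans x y
    exact reachable_apply_of_mem_closure_swaps E hg x
  calc Fintype.card α = Nat.card α := Nat.card_eq_fintype_card.symm
    _ ≤ Nat.card G.edgeSet + 1 := hG.card_vert_le_card_edgeSet_add_one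
    _ ≤ E.length + 1 := by
      gcongr
      rw [SimpleGraph.edgeSet_fromEdgeSet, Nat.card_coe_set_eq]
      calc _ ≤ Set.ncard {e | e ∈ E.map fun p => s(p.1, p.2)} :=
            Set.ncard_le_ncard Set.sdiff_subset (Set.toFinite _)
        _ = (E.map fun p => s(p.1, p.2)).toFinset.card := by
          rw [← Set.ncard_coe_finset]; congr; ext; simp
        _ ≤ E.length := (List.toFinset_card_le _).trans (List.length_map _).le

theorem card_le_two_mul_length_add_one [Fintype α] (L : List (Perm α))
    (h3 : ∀ δ ∈ L, δ.IsThreeCycle)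
    (htrans : ∀ x y : α, ∃ g ∈ Subgroup.closure {τ | τ ∈ L}, g x = y) :
    Fintype.card α ≤ 2 * L.length + 1 := by
  rcases isEmpty_or_nonempty α with hα | hα
  · simp
  have hsupp : ∀ δ ∈ L, ∃ v, v ∈ δ.support := fun δ hδ =>
    Finset.card_pos.mp (by rw [(h3 δ hδ).card_support]; norm_num)
  choose! v hv using hsupp
  set E := L.flatMap fun δ => [(v δ, δ (v δ)), (δ (v δ), δ (δ (v δ)))]
  have hle : Subgroup.closure {τ | τ ∈ L} ≤
      Subgroup.closure {σ | σ ∈ E.map fun p => swap p.1 p.2} := by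
    rw [Subgroup.closure_le]
    intro δ hδ
    rw [SetLike.mem_coe, ((h3 δ hδ).eq_swap_mul_swap_iff_mem_support).mpr (hv δ hδ)]
    have hedge : ∀ p ∈ [(v δ, δ (v δ)), (δ (v δ), δ (δ (v δ)))],
        swap p.1 p.2 ∈ Subgroup.closure {σ | σ ∈ E.map fun p => swap p.1 p.2} :=
      fun p hp => Subgroup.subset_closure (List.mem_map_of_mem (List.mem_flatMap_of_mem hδ hp) :
        swap p.1 p.2 ∈ E.map fun p => swap p.1 p.2)
    exact mul_mem (hedge (v δ, δ (v δ)) (by simp)) (hedge (δ (v δ), δ (δ (v δ))) (by simp))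
  have hE : E.length = 2 * L.length := by
    simp [E, List.length_flatMap, mul_comm]
  rw [← hE]
  refine card_le_length_add_one_of_swaps E fun x y => ?_
  obtain ⟨g, hg, hgxy⟩ := htrans x y
  exact ⟨g, hle hg, hgxy⟩

theorem exists_mem_apply_eq_of_isCycle_mem [Fintype α] {H : Subgroup (Perm α)}
    {ρ g : Perm α} {a : α} (hρ : ρ.IsCycle) (hρH : ρ ∈ H) (hgH : g ∈ H)
    (hsupp : ∀ x ≠ a, x ∈ ρ.support) (hga : g a ≠ a) (x y : α) :
    ∃ h ∈ H, h x = y := by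
  have hreach : ∀ x, ∃ h ∈ H, h x = g a := by
    intro x
    by_cases hx : x = a
    · exact ⟨g, hgH, by rw [hx]⟩
    · obtain ⟨i, hi⟩ := hρ.sameCycle (mem_support.mp (hsupp x hx)) (mem_support.mp (hsupp _ hga))
      exact ⟨ρ ^ i, zpow_mem hρH i, hi⟩
  obtain ⟨h₁, hh₁, hx⟩ := hreach x
  obtain ⟨h₂, hh₂, hy⟩ := hreach y
  exact ⟨h₂⁻¹ * h₁, mul_mem (inv_mem hh₂) hh₁, by rw [Perm.mul_apply, hx, ← hy, inv_eq_iff_eq]⟩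

end

section

open List

variable {α : Type*} [DecidableEq α]

theorem formPerm_cons_cons_cons (a b c : α) (l : List α) :
    formPerm (a :: b :: c :: l) = formPerm [a, b, c] * formPerm (c :: l) := by
  simp [formPerm_cons_cons, mul_assoc]

theorem formPerm_append_cons (l : List α) (hl : l ≠ []) (c : α) (m : List α) :
    formPerm (l ++ c :: m) = formPerm l * swap (l.getLast hl) c * formPerm (c :: m) := by
  induction l with
  | nil => contradiction
  | cons a t ih =>
    cases t with
    | nil => simp [formPerm_cons_cons]
    | cons b t =>
      simp only [cons_append, formPerm_cons_cons] at ih ⊢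
      rw [ih (cons_ne_nil _ _), getLast_cons (cons_ne_nil _ _), mul_assoc, mul_assoc, mul_assoc]

theorem formPerm_cons_cons_mul_formPerm_cons (a b c : α) (l m : List α) (hc : c ∉ b :: l) :
    formPerm (a :: b :: l) * formPerm (c :: m) =
      formPerm [a, b, c] * formPerm (b :: (l ++ c :: m)) := by
  set f := formPerm (b :: l)
  have hlast : swap b c = f * swap ((b :: l).getLast (cons_ne_nil _ _)) c * f⁻¹ := by
    rw [← swap_apply_apply, formPerm_apply_getLast, formPerm_apply_of_notMem hc]
  rw [← cons_append, formPerm_append_cons _ (cons_ne_nil _ _), formPerm_cons_cons a b l,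
    formPerm_cons_cons, formPerm_pair, hlast]
  simp only [f, mul_assoc, inv_mul_cancel_left, swap_mul_self_mul]

theorem isThreeCycle_formPerm [Fintype α] {a b c : α} (h : [a, b, c].Nodup) :
    (formPerm [a, b, c]).IsThreeCycle := by
  rw [← card_support_eq_three_iff, support_formPerm_of_nodup _ h (by simp),
    toFinset_card_of_nodup h, length_cons, length_cons, length_singleton]

theorem exists_threeCycles_prod_eq_formPerm [Fintype α] (m : ℕ) {a : α} {l : List α}
    (hnd : (a :: l).Nodup) (hl : l.length = 2 * m) :
    ∃ L : List (Perm α), (∀ δ ∈ L, δ.IsThreeCycle) ∧ L.prod = formPerm (a :: l) ∧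
      L.length = m := by
  induction m generalizing a l with
  | zero =>
    rw [length_eq_zero_iff.mp hl]
    exact ⟨[], by simp, by simp, rfl⟩
  | succ m ih =>
    rcases l with _ | ⟨b, _ | ⟨c, l⟩⟩ <;> simp only [length_cons, length_nil] at hl
    · omega
    · omega
    obtain ⟨L, h3, hprod, hlen⟩ := ih hnd.of_cons.of_cons (by omega)
    refine ⟨formPerm [a, b, c] :: L, ?_, ?_, by simp [hlen]⟩
    · have habc : [a, b, c] <+ a :: b :: c :: l :=
        (((nil_sublist l).cons_cons c).cons_cons b).cons_cons a
      exact forall_mem_cons.mpr ⟨isThreeCycle_formPerm (hnd.sublist habc), h3⟩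
    · rw [prod_cons, hprod, formPerm_cons_cons_cons a b c l]

theorem exists_threeCycles_transitive_prod_eq [Fintype α] {a b c : α} {l m : List α} {k : ℕ}
    (hnd : (a :: b :: l ++ c :: m).Nodup) (hcover : ∀ x, x ∈ a :: b :: l ++ c :: m)
    (hk : Fintype.card α = 2 * k) :
    ∃ L : List (Perm α), (∀ δ ∈ L, δ.IsThreeCycle) ∧
      L.prod = formPerm (a :: b :: l) * formPerm (c :: m) ∧
      (∀ x y : α, ∃ g ∈ Subgroup.closure {τ | τ ∈ L}, g x = y) ∧ L.length = k := by
  have hlength : (a :: b :: l ++ c :: m).length = 2 * k := by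
    rw [← hk, ← toFinset_card_of_nodup hnd,
      Finset.eq_univ_of_forall fun x => mem_toFinset.mpr (hcover x), Finset.card_univ]
  have hρnd : (b :: (l ++ c :: m)).Nodup := hnd.of_cons
  have hc : c ∉ b :: l := fun h => disjoint_of_nodup_append hρnd h mem_cons_self
  have hab : a ≠ b := fun h => (nodup_cons.mp hnd).1 (h ▸ mem_cons_self)
  have habc : [a, b, c].Nodup := by
    have hac : a ≠ c := fun h => (nodup_cons.mp hnd).1 (by simp [h])
    have hbc : b ≠ c := fun h => hc (h ▸ mem_cons_self)
    simp [hab, hac, hbc]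
  obtain ⟨L, h3, hprod, hlen⟩ :=
    exists_threeCycles_prod_eq_formPerm (k - 1) hρnd (by simp at hlength ⊢; omega)
  refine ⟨formPerm [a, b, c] :: L, forall_mem_cons.mpr ⟨isThreeCycle_formPerm habc, h3⟩, ?_, ?_,
    by simp at hlength ⊢; omega⟩
  · rw [prod_cons, hprod, formPerm_cons_cons_mul_formPerm_cons _ _ _ _ _ hc]
  have hρ : (formPerm (b :: (l ++ c :: m))).IsCycle := isCycle_formPerm hρnd (by simp; omega)
  have hsupp : ∀ x ≠ a, x ∈ (formPerm (b :: (l ++ c :: m))).support := by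
    intro x hx
    rw [support_formPerm_of_nodup _ hρnd (by simp), mem_toFinset]
    simpa [hx] using hcover x
  refine exists_mem_apply_eq_of_isCycle_mem hρ ?_ (Subgroup.subset_closure mem_cons_self)
    hsupp (by rw [formPerm_apply_head _ _ _ habc]; exact Ne.symm hab)
  exact hprod ▸ list_prod_mem fun τ hτ => Subgroup.subset_closure (mem_cons_of_mem _ hτ)

end

section

open List Finset

variable {α : Type*} [DecidableEq α] [Fintype α]

theorem Equiv.Perm.IsCycle.exists_formPerm_eq {σ : Perm α} (hσ : σ.IsCycle) :
    ∃ a b l, (a :: b :: l).Nodup ∧ formPerm (a :: b :: l) = σ := by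
  obtain ⟨x, hx⟩ := hσ.nonempty_support
  have hlen : 2 ≤ (σ.toList x).length := two_le_length_toList_iff_mem_support.mpr hx
  have hform : formPerm (σ.toList x) = σ := by
    rw [formPerm_toList, hσ.cycleOf_eq (mem_support.mp hx)]
  have hnd := nodup_toList σ x
  generalize σ.toList x = l at hlen hform hnd
  match l, hlen with
  | a :: b :: l, _ => exact ⟨a, b, l, hnd, hform⟩

theorem support_formPerm_cons_cons {a b : α} {l : List α} (h : (a :: b :: l).Nodup) :
    (formPerm (a :: b :: l)).support = (a :: b :: l).toFinset :=
  support_formPerm_of_nodup _ h (by simp)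

theorem Equiv.Perm.IsCycle.exists_formPerm_mul_formPerm {σ : Perm α} (hσ : σ.IsCycle)
    (hfix : #σ.supportᶜ = 1) :
    ∃ a b c l m, (a :: b :: l ++ c :: m).Nodup ∧ (∀ x, x ∈ a :: b :: l ++ c :: m) ∧
      σ = formPerm (a :: b :: l) * formPerm (c :: m) := by
  obtain ⟨y, hy⟩ := card_eq_one.mp hfix
  obtain ⟨a, b, l, hnd, rfl⟩ := hσ.exists_formPerm_eq
  have hmem : ∀ x, x ∈ a :: b :: l ↔ x ≠ y := fun x => by
    rw [← mem_toFinset, ← support_formPerm_cons_cons hnd, ← not_iff_not, not_not, ← mem_compl,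
      hy, Finset.mem_singleton]
  refine ⟨a, b, y, l, [], hnd.append (nodup_singleton y) ?_, fun x => ?_, by simp⟩
  · exact disjoint_singleton.mpr fun h => (hmem y).mp h rfl
  · by_cases hx : x = y
    · simp [hx]
    · exact mem_append_left _ ((hmem x).mpr hx)

theorem exists_formPerm_mul_formPerm_of_card_cycleType_eq_two {σ : Perm α}
    (h2 : Multiset.card σ.cycleType = 2) (hsupp : σ.support = univ) :
    ∃ a b c l m, (a :: b :: l ++ c :: m).Nodup ∧ (∀ x, x ∈ a :: b :: l ++ c :: m) ∧
      σ = formPerm (a :: b :: l) * formPerm (c :: m) := by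
  rw [cycleType_def, Multiset.card_map] at h2
  obtain ⟨τ₁, τ₂, hne, hcf⟩ := card_eq_two.mp h2
  obtain ⟨hcyc, hpw, hprod⟩ := cycleFactorsFinset_eq_finset.mp hcf
  have hdisj : τ₁.Disjoint τ₂ := hpw (by simp) (by simp) hne
  have hσ : σ = τ₁ * τ₂ := by
    rw [← hprod, noncommProd_insert_of_notMem _ _ _ _ (notMem_singleton.mpr hne),
      noncommProd_singleton, id, id]
  obtain ⟨a, b, l, hnd₁, rfl⟩ := (hcyc τ₁ (by simp)).exists_formPerm_eq
  obtain ⟨c, d, m, hnd₂, rfl⟩ := (hcyc τ₂ (by simp)).exists_formPerm_eq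
  have hdisj' := hdisj.disjoint_support
  rw [support_formPerm_cons_cons hnd₁, support_formPerm_cons_cons hnd₂] at hdisj'
  refine ⟨a, b, c, l, d :: m, hnd₁.append hnd₂ ?_, fun x => ?_, hσ⟩
  · intro x hx₁ hx₂
    exact Finset.disjoint_left.mp hdisj' (mem_toFinset.mpr hx₁) (mem_toFinset.mpr hx₂)
  · have hx : x ∈ σ.support := hsupp ▸ Finset.mem_univ x
    rw [hσ, hdisj.support_mul, support_formPerm_cons_cons hnd₁, support_formPerm_cons_cons hnd₂,
      Finset.mem_union, mem_toFinset, mem_toFinset] at hx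
    exact mem_append.mpr hx

theorem exists_formPerm_mul_formPerm_of_two_cycles {σ : Perm α} (hcard : 3 ≤ Fintype.card α)
    (hσ : Multiset.card σ.cycleType + (Fintype.card α - #σ.support) = 2) :
    ∃ a b c l m, (a :: b :: l ++ c :: m).Nodup ∧ (∀ x, x ∈ a :: b :: l ++ c :: m) ∧
      σ = formPerm (a :: b :: l) * formPerm (c :: m) := by
  have hle : #σ.support ≤ Fintype.card α := card_le_univ _
  obtain h | h | h : Multiset.card σ.cycleType = 0 ∨ Multiset.card σ.cycleType = 1 ∨
      Multiset.card σ.cycleType = 2 := by omega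
  · rw [card_cycleType_eq_zero.mp h, support_one, Finset.card_empty] at hσ
    omega
  · exact (card_cycleType_eq_one.mp h).exists_formPerm_mul_formPerm
      (by rw [card_compl]; omega)
  · exact exists_formPerm_mul_formPerm_of_card_cycleType_eq_two h
      (eq_univ_of_card _ (by omega))

end

/-- For even `n ≥ 4`, a permutation `σ` with exactly two disjoint cycles (fixed points
counted as cycles of length 1) admits a transitive factorization into 3-cycles, and
the minimal number of 3-cycles in such a factorization is `n/2`. -/
theorem min_threeCycle_factorization_of_two_cycles
    (n : ℕ) (hn : 4 ≤ n) (heven : Even n) (σ : Perm (Fin n))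
    (hσ : cycleCount σ = 2) :
    (∃ L : List (Perm (Fin n)), IsTransFact3 σ L ∧ L.length = n / 2) ∧
    (∀ L : List (Perm (Fin n)), IsTransFact3 σ L → n / 2 ≤ L.length) := by
  obtain ⟨k, hk⟩ := heven
  have hcard : Fintype.card (Fin n) = 2 * k := by rw [Fintype.card_fin]; omega
  constructor
  · obtain ⟨a, b, c, l, m, hnd, hcover, rfl⟩ :=
      exists_formPerm_mul_formPerm_of_two_cycles (σ := σ) (by omega) (by rwa [Fintype.card_fin])
    obtain ⟨L, h3, hprod, htrans, hlen⟩ := exists_threeCycles_transitive_prod_eq hnd hcover hcard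
    exact ⟨L, ⟨h3, hprod, htrans⟩, by omega⟩
  · rintro L ⟨h3, -, htrans⟩
    have := card_le_two_mul_length_add_one L h3 htrans
    omega
end
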